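/- arXiv:1911.12175 — 8 statements merged into one kernel-verified Lean document; each statement's English description precedes it below -/
import Mathlib

section
/- Let H and G be finitely generated groups with word metrics, and (X,d) a metric space. If H acts translation-like on G and G acts translation-like on X, then H acts translation-like on X (via composing the orbit identification: picking orbit representatives of the G-action and letting H act through its action on G inside each orbit). -/
/-!
Choose a representative `rep x` in every `G`-orbit of `X`; freeness gives each point a unique
coordinate `coord x ∈ G` with `x = β (coord x) (rep x)`, so every orbit is a copy of `G` and
`H` can act on it through its action on the coordinate. Freeness and the action laws transfer
directly. For the displacement, `β (α h g) (rep x) = β (g⁻¹ * α h g) x` with `g = coord x`, and by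
left invariance `g⁻¹ * α h g` lies in the ball of radius `sup_g dist g (α h g)` around `1`, which is
finite, so only finitely many displacement bounds of `β` are involved.
-/

/-- A translation-like (right) action of a group `K` on a metric space `X`:
a free action in which every group element moves points a uniformly bounded
distance. -/
def RightTranslationLike {K X : Type*} [Group K] [MetricSpace X]
    (α : K → X → X) : Prop :=
  (∀ x, α 1 x = x) ∧ (∀ k₁ k₂ x, α (k₁ * k₂) x = α k₂ (α k₁ x)) ∧
  (∀ k x, α k x = x → k = 1) ∧ ∀ k, ∃ C : ℝ, ∀ x, dist x (α k x) ≤ C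

structure IsFreeRightAction {K Y : Type*} [Group K] (β : K → Y → Y) : Prop where
  one_apply : ∀ y, β 1 y = y
  mul_apply : ∀ k₁ k₂ y, β (k₁ * k₂) y = β k₂ (β k₁ y)
  eq_one_of_apply_eq : ∀ k y, β k y = y → k = 1

theorem RightTranslationLike.isFreeRightAction {K Y : Type*} [Group K] [MetricSpace Y]
    {β : K → Y → Y} (hβ : RightTranslationLike β) : IsFreeRightAction β :=
  ⟨hβ.1, hβ.2.1, hβ.2.2.1⟩

namespace IsFreeRightAction

variable {H K Y : Type*} [Group K] {β : K → Y → Y} (hβ : IsFreeRightAction β)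

include hβ

theorem inv_apply_apply (k : K) (y : Y) : β k⁻¹ (β k y) = y := by
  rw [← hβ.mul_apply, mul_inv_cancel, hβ.one_apply]

theorem eq_of_apply_eq {k k' : K} {y : Y} (h : β k y = β k' y) : k = k' := by
  refine mul_inv_eq_one.mp (hβ.eq_one_of_apply_eq _ y ?_)
  rw [hβ.mul_apply, h, hβ.inv_apply_apply]

def orbitSetoid : Setoid Y where
  r x y := ∃ k, β k x = y
  iseqv :=
    { refl := fun x => ⟨1, hβ.one_apply x⟩
      symm := fun ⟨k, hk⟩ => ⟨k⁻¹, by rw [← hk, hβ.inv_apply_apply]⟩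
      trans := fun ⟨k, hk⟩ ⟨k', hk'⟩ => ⟨k * k', by rw [hβ.mul_apply, hk, hk']⟩ }

noncomputable def rep (y : Y) : Y :=
  (Quotient.mk hβ.orbitSetoid y).out

theorem rep_apply (k : K) (y : Y) : hβ.rep (β k y) = hβ.rep y :=
  congrArg Quotient.out (Quotient.sound (s := hβ.orbitSetoid) ⟨k⁻¹, hβ.inv_apply_apply k y⟩)

theorem exists_apply_rep (y : Y) : ∃ k, β k (hβ.rep y) = y :=
  Quotient.mk_out (s := hβ.orbitSetoid) y

noncomputable def coord (y : Y) : K :=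
  (hβ.exists_apply_rep y).choose

theorem apply_coord_rep (y : Y) : β (hβ.coord y) (hβ.rep y) = y :=
  (hβ.exists_apply_rep y).choose_spec

theorem inv_coord_apply (y : Y) : β (hβ.coord y)⁻¹ y = hβ.rep y :=
  (congrArg _ (hβ.apply_coord_rep y)).symm.trans (hβ.inv_apply_apply _ _)

theorem rep_rep (y : Y) : hβ.rep (hβ.rep y) = hβ.rep y := by
  conv_rhs => rw [← hβ.apply_coord_rep y, hβ.rep_apply]

theorem coord_apply_rep (k : K) (y : Y) : hβ.coord (β k (hβ.rep y)) = k := by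
  refine hβ.eq_of_apply_eq (y := hβ.rep y) ?_
  conv_rhs => rw [← hβ.apply_coord_rep (β k (hβ.rep y))]
  rw [hβ.rep_apply, hβ.rep_rep]

noncomputable def induced (α : H → K → K) (h : H) (y : Y) : Y :=
  β (α h (hβ.coord y)) (hβ.rep y)

theorem induced_apply_eq (α : H → K → K) (h : H) (y : Y) :
    hβ.induced α h y = β ((hβ.coord y)⁻¹ * α h (hβ.coord y)) y := by
  rw [hβ.mul_apply, hβ.inv_coord_apply]
  rfl

theorem induced_isFreeRightAction [Group H] {α : H → K → K} (hα : IsFreeRightAction α) :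
    IsFreeRightAction (hβ.induced α) where
  one_apply y := by
    rw [induced, hα.one_apply, hβ.apply_coord_rep]
  mul_apply h₁ h₂ y := by
    simp only [induced, hβ.coord_apply_rep, hβ.rep_apply, hβ.rep_rep, hα.mul_apply]
  eq_one_of_apply_eq h y hy := by
    refine hα.eq_one_of_apply_eq h (hβ.coord y) (hβ.eq_of_apply_eq (y := hβ.rep y) ?_)
    rw [hβ.apply_coord_rep]
    exact hy

end IsFreeRightAction

theorem IsFreeRightAction.exists_dist_induced_le {H G X : Type*} [Group G]
    [MetricSpace G] [MetricSpace X]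
    (hinv : ∀ a b c : G, dist (a * b) (a * c) = dist b c)
    (hfin : ∀ R : ℝ, {g : G | dist 1 g ≤ R}.Finite)
    {α : H → G → G} (hαb : ∀ h, ∃ C : ℝ, ∀ g, dist g (α h g) ≤ C)
    {β : G → X → X} (hβ : IsFreeRightAction β) (hβb : ∀ g, ∃ C : ℝ, ∀ x, dist x (β g x) ≤ C)
    (h : H) : ∃ C : ℝ, ∀ x, dist x (hβ.induced α h x) ≤ C := by
  obtain ⟨C, hC⟩ := hαb h
  choose D hD using hβb
  obtain ⟨M, hM⟩ := ((hfin C).image D).bddAbove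
  refine ⟨M, fun x => ?_⟩
  set g := hβ.coord x
  have hball : g⁻¹ * α h g ∈ {s : G | dist 1 s ≤ C} := by
    change dist 1 _ ≤ C
    rw [← hinv g, mul_one, mul_inv_cancel_left]
    exact hC g
  rw [hβ.induced_apply_eq]
  exact (hD _ x).trans (hM ⟨_, hball, rfl⟩)

/-- If `H` acts translation-like on the finitely generated group
`G` (with a word metric: left-invariant with finite balls) and `G` acts
translation-like on a metric space `X`, then `H` acts translation-like on `X`. -/
theorem translation_like_transitive
    {H G X : Type*} [Group H] [Group G] [MetricSpace G] [MetricSpace X]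
    (hinvG : ∀ a b c : G, dist (a * b) (a * c) = dist b c)
    (hfinG : ∀ R : ℝ, {g : G | dist 1 g ≤ R}.Finite)
    (α : H → G → G) (hα : RightTranslationLike α)
    (β : G → X → X) (hβ : RightTranslationLike β) :
    ∃ γ : H → X → X, RightTranslationLike γ := by
  have hβfree := hβ.isFreeRightAction
  have hγ := hβfree.induced_isFreeRightAction hα.isFreeRightAction
  exact ⟨hβfree.induced α, hγ.one_apply, hγ.mul_apply, hγ.eq_one_of_apply_eq,
    hβfree.exists_dist_induced_le hinvG hfinG hα.2.2.2 hβ.2.2.2⟩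
end

section
/- Let (X,d) be a uniformly discrete metric space (i.e., inf{d(x,y) : x ≠ y} > 0) on which a group G acts translation-like. Define d_{X/G} on the orbit set X/G by d_{X/G}([x],[y]) = inf over chains {(xᵢ,yᵢ)}_{i=1}^k (with x₁ = x, y_k = y, and for each i < k some gᵢ ∈ G with gᵢ·yᵢ = x_{i+1}) of Σᵢ d(xᵢ,yᵢ). Then d_{X/G} is a metric on X/G. -/
/-- A chain from `x` to `y` relative to the action `α`: a nonempty finite list of
pairs `(xᵢ,yᵢ)` with `x₁ = x`, `y_k = y`, and for each `i < k` some `g ∈ K` with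
`α g yᵢ = x_{i+1}`. -/
def IsChainFrom {K X : Type*} (α : K → X → X) (x y : X)
    (l : List (X × X)) : Prop :=
  (l.map Prod.fst).head? = some x ∧ (l.map Prod.snd).getLast? = some y ∧
  l.Chain' (fun p q => ∃ k : K, α k p.2 = q.1)

/-- The chain distance `d_{X/G}`: infimum over chains of the sum of the
distances within each pair. -/
noncomputable def chainDist {K X : Type*} [MetricSpace X] (α : K → X → X)
    (x y : X) : ℝ :=
  sInf {s : ℝ | ∃ l : List (X × X), IsChainFrom α x y l ∧
    s = (l.map fun p => dist p.1 p.2).sum}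

/-!
Reversing a chain (using inverses in `G`) and concatenating two chains (gluing with `1 ∈ G`)
give symmetry and the triangle inequality; if `α g x = y`, the chain `(x, x), (y, y)` has
length zero. Conversely, by uniform discreteness every off-diagonal pair of a chain costs at
least `ε`, so a chain of length `< ε` consists of diagonal pairs only, and such a chain never
leaves an orbit.
-/

section Chains

variable {K X : Type*} {α : K → X → X} {x y z : X}

theorem IsChainFrom.ne_nil {l : List (X × X)} (h : IsChainFrom α x y l) : l ≠ [] := by
  rintro rfl
  simp [IsChainFrom] at h

theorem isChainFrom_singleton : IsChainFrom α x y [(x, y)] :=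
  ⟨rfl, rfl, List.isChain_singleton _⟩

theorem IsChainFrom.eq_of_singleton {p : X × X} (h : IsChainFrom α x y [p]) : p = (x, y) := by
  obtain ⟨h₁, h₂, -⟩ := h
  simp only [List.map_cons, List.map_nil, List.head?_cons, List.getLast?_singleton,
    Option.some.injEq] at h₁ h₂
  exact Prod.ext h₁ h₂

theorem IsChainFrom.of_cons_cons {p q : X × X} {t : List (X × X)}
    (h : IsChainFrom α x y (p :: q :: t)) :
    p.1 = x ∧ (∃ k, α k p.2 = q.1) ∧ IsChainFrom α q.1 y (q :: t) := by
  obtain ⟨h₁, h₂, h₃⟩ := h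
  obtain ⟨hpq, ht⟩ := List.isChain_cons_cons.mp h₃
  exact ⟨Option.some.inj h₁, hpq, rfl, by simpa using h₂, ht⟩

theorem IsChainFrom.append [One K] (h_one : ∀ x, α 1 x = x) {l₁ l₂ : List (X × X)}
    (h₁ : IsChainFrom α x y l₁) (h₂ : IsChainFrom α y z l₂) :
    IsChainFrom α x z (l₁ ++ l₂) := by
  have hne₁ := h₁.ne_nil
  have hne₂ := h₂.ne_nil
  obtain ⟨h₁₁, h₁₂, h₁₃⟩ := h₁
  obtain ⟨h₂₁, h₂₂, h₂₃⟩ := h₂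
  refine ⟨?_, ?_, List.isChain_append.mpr ⟨h₁₃, h₂₃, fun a ha b hb => ⟨1, ?_⟩⟩⟩
  · rwa [List.map_append, List.head?_append_of_ne_nil _ (by simpa using hne₁)]
  · rwa [List.map_append, List.getLast?_append_of_ne_nil _ (by simpa using hne₂)]
  · have ha : a.2 = y := by simpa [List.getLast?_map, Option.mem_def.mp ha] using h₁₂
    have hb : b.1 = y := by simpa [List.head?_map, Option.mem_def.mp hb] using h₂₁
    rw [h_one, ha, hb]

theorem IsChainFrom.reverse [Group K] (h_one : ∀ x, α 1 x = x)
    (h_mul : ∀ k₁ k₂ x, α (k₁ * k₂) x = α k₂ (α k₁ x)) {l : List (X × X)}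
    (h : IsChainFrom α x y l) : IsChainFrom α y x (l.map Prod.swap).reverse := by
  obtain ⟨h₁, h₂, h₃⟩ := h
  refine ⟨?_, ?_, ?_⟩
  · simpa [List.map_reverse, Function.comp_def, List.head?_reverse] using h₂
  · simpa [List.map_reverse, Function.comp_def, List.getLast?_reverse] using h₁
  · change List.IsChain _ _
    rw [List.isChain_reverse, List.isChain_map]
    refine h₃.imp fun p q ⟨k, hk⟩ => ⟨k⁻¹, ?_⟩
    rw [Prod.snd_swap, Prod.fst_swap, ← hk, ← h_mul, mul_inv_cancel, h_one]

theorem IsChainFrom.exists_eq_of_forall_fst_eq_snd [Monoid K] (h_one : ∀ x, α 1 x = x)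
    (h_mul : ∀ k₁ k₂ x, α (k₁ * k₂) x = α k₂ (α k₁ x)) {l : List (X × X)}
    (h : IsChainFrom α x y l) (hdiag : ∀ p ∈ l, p.1 = p.2) : ∃ g, α g x = y := by
  induction l generalizing x with
  | nil => exact absurd rfl h.ne_nil
  | cons p t ih =>
    cases t with
    | nil =>
      obtain rfl := h.eq_of_singleton
      exact ⟨1, (h_one x).trans (hdiag _ List.mem_cons_self)⟩
    | cons q t =>
      obtain ⟨rfl, ⟨k, hk⟩, ht⟩ := h.of_cons_cons
      obtain ⟨g, hg⟩ := ih ht fun r hr => hdiag r (List.mem_cons_of_mem _ hr)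
      exact ⟨k * g, by rw [h_mul, hdiag _ List.mem_cons_self, hk, hg]⟩

end Chains

section ChainLength

variable {X : Type*} [MetricSpace X]

def chainLength (l : List (X × X)) : ℝ :=
  (l.map fun p => dist p.1 p.2).sum

theorem chainLength_nonneg (l : List (X × X)) : 0 ≤ chainLength l :=
  List.sum_nonneg fun _ hr => by
    obtain ⟨p, -, rfl⟩ := List.mem_map.mp hr
    exact dist_nonneg

theorem dist_le_chainLength {l : List (X × X)} {p : X × X} (hp : p ∈ l) :
    dist p.1 p.2 ≤ chainLength l :=
  List.single_le_sum (fun _ hr => by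
      obtain ⟨q, -, rfl⟩ := List.mem_map.mp hr
      exact dist_nonneg)
    _ (List.mem_map_of_mem hp)

theorem chainLength_append (l₁ l₂ : List (X × X)) :
    chainLength (l₁ ++ l₂) = chainLength l₁ + chainLength l₂ := by
  simp [chainLength]

theorem chainLength_reverse_map_swap (l : List (X × X)) :
    chainLength (l.map Prod.swap).reverse = chainLength l := by
  simp [chainLength, List.map_reverse, Function.comp_def, dist_comm]

variable {K : Type*} {α : K → X → X} {x y : X}

theorem chainDist_le {l : List (X × X)} (h : IsChainFrom α x y l) :
    chainDist α x y ≤ chainLength l :=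
  csInf_le ⟨0, by rintro _ ⟨l, -, rfl⟩; exact chainLength_nonneg l⟩ ⟨l, h, rfl⟩

theorem le_chainDist {c : ℝ} (h : ∀ l, IsChainFrom α x y l → c ≤ chainLength l) :
    c ≤ chainDist α x y :=
  le_csInf ⟨_, _, isChainFrom_singleton, rfl⟩ (by rintro _ ⟨l, hl, rfl⟩; exact h l hl)

theorem chainDist_nonneg : 0 ≤ chainDist α x y :=
  le_chainDist fun l _ => chainLength_nonneg l

end ChainLength

section ChainDist

variable {K X : Type*} [MetricSpace X] {α : K → X → X}

theorem chainDist_comm [Group K] (h_one : ∀ x, α 1 x = x)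
    (h_mul : ∀ k₁ k₂ x, α (k₁ * k₂) x = α k₂ (α k₁ x)) (x y : X) :
    chainDist α x y = chainDist α y x := by
  have key : ∀ x y : X, chainDist α x y ≤ chainDist α y x := fun x y =>
    le_chainDist fun l hl =>
      (chainDist_le (hl.reverse h_one h_mul)).trans_eq (chainLength_reverse_map_swap l)
  exact (key x y).antisymm (key y x)

theorem chainDist_triangle [One K] (h_one : ∀ x, α 1 x = x) (x y z : X) :
    chainDist α x z ≤ chainDist α x y + chainDist α y z := by
  suffices chainDist α x z - chainDist α y z ≤ chainDist α x y by linarith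
  refine le_chainDist fun l₁ hl₁ => ?_
  suffices chainDist α x z - chainLength l₁ ≤ chainDist α y z by linarith
  refine le_chainDist fun l₂ hl₂ => ?_
  have := chainDist_le (hl₁.append h_one hl₂)
  rw [chainLength_append] at this
  linarith

theorem chainDist_eq_zero_of_exists_eq {x y : X} (hxy : ∃ g, α g x = y) :
    chainDist α x y = 0 := by
  obtain ⟨g, hg⟩ := hxy
  have hchain : IsChainFrom α x y [(x, x), (y, y)] :=
    ⟨rfl, rfl, List.isChain_cons_cons.mpr ⟨⟨g, hg⟩, List.isChain_singleton _⟩⟩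
  refine le_antisymm ((chainDist_le hchain).trans_eq ?_) chainDist_nonneg
  simp [chainLength]

theorem chainDist_pos_of_not_exists_eq [Monoid K] {ε : ℝ} (hε : 0 < ε)
    (hud : ∀ x y : X, x ≠ y → ε ≤ dist x y) (h_one : ∀ x, α 1 x = x)
    (h_mul : ∀ k₁ k₂ x, α (k₁ * k₂) x = α k₂ (α k₁ x)) {x y : X}
    (hxy : ¬∃ g, α g x = y) : 0 < chainDist α x y := by
  refine hε.trans_le (le_chainDist fun l hl => ?_)
  by_contra! hshort
  refine hxy (hl.exists_eq_of_forall_fst_eq_snd h_one h_mul fun p hp => ?_)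
  by_contra hne
  exact (hud _ _ hne).not_gt ((dist_le_chainLength hp).trans_lt hshort)

end ChainDist

/-- For a uniformly discrete metric space `X` with a
translation-like action of `G`, the chain distance is a metric on the orbit
space `X/G`: it is symmetric, satisfies the triangle inequality, vanishes
exactly on pairs of points in the same orbit, and is positive on distinct
orbits. -/
theorem chainDist_is_metric_on_quotient
    {G X : Type*} [Group G] [MetricSpace X]
    (hud : ∃ ε > (0 : ℝ), ∀ x y : X, x ≠ y → ε ≤ dist x y)
    (α : G → X → X) (hα : RightTranslationLike α) :
    (∀ x y : X, chainDist α x y = chainDist α y x) ∧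
    (∀ x y z : X, chainDist α x z ≤ chainDist α x y + chainDist α y z) ∧
    (∀ x y : X, (∃ g, α g x = y) → chainDist α x y = 0) ∧
    (∀ x y : X, ¬ (∃ g, α g x = y) → 0 < chainDist α x y) := by
  obtain ⟨h_one, h_mul, -⟩ := hα
  obtain ⟨ε, hε, hud⟩ := hud
  exact ⟨chainDist_comm h_one h_mul, chainDist_triangle h_one,
    fun _ _ => chainDist_eq_zero_of_exists_eq,
    fun _ _ => chainDist_pos_of_not_exists_eq hε hud h_one h_mul⟩
end

section
/- Let X and Y be uniformly discrete metric spaces, F : X → Y a bi-Lipschitz bijection with constant C, and G a group acting translation-like on X. Equip Y with the induced action g·y = F(g·F⁻¹(y)). Then F descends to a bijection F̄ : X/G → Y/G satisfying (1/C) d_{X/G}([x],[y]) ≤ d_{Y/G}([F(x)],[F(y)]) ≤ C d_{X/G}([x],[y]); in particular X/G and Y/G are bi-Lipschitz. -/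
/- The chain distance only sees distances between consecutive points and the orbit
relation. Transporting chains along the equivariant bijection `F` (and back along
`F.symm`) multiplies each link by at most `C`, so each chain distance bounds the other
up to the factor `C`. -/

section ChainDist

variable {K X Y : Type*}

lemma IsChainFrom.singleton (α : K → X → X) (x y : X) : IsChainFrom α x y [(x, y)] :=
  ⟨rfl, rfl, List.isChain_singleton _⟩

lemma IsChainFrom.map {α : K → X → X} {β : K → Y → Y} {f : X → Y}
    (hf : ∀ k x, f (α k x) = β k (f x)) {x y : X} {l : List (X × X)}
    (h : IsChainFrom α x y l) : IsChainFrom β (f x) (f y) (l.map (Prod.map f f)) := by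
  obtain ⟨hhead, hlast, hchain⟩ := h
  refine ⟨?_, ?_, ?_⟩
  · simpa [List.head?_map] using congrArg (Option.map f) hhead
  · simpa [List.getLast?_map] using congrArg (Option.map f) hlast
  · refine List.isChain_map _ |>.mpr (hchain.imp ?_)
    rintro p q ⟨k, hk⟩
    exact ⟨k, by simp [← hk, hf]⟩

variable [MetricSpace X] [MetricSpace Y]

lemma chainDist_le_s4 {α : K → X → X} {x y : X} {l : List (X × X)}
    (hl : IsChainFrom α x y l) : chainDist α x y ≤ (l.map fun p => dist p.1 p.2).sum := by
  refine csInf_le ⟨0, ?_⟩ ⟨l, hl, rfl⟩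
  rintro _ ⟨l', -, rfl⟩
  exact List.sum_nonneg fun _ ha => by
    obtain ⟨p, -, rfl⟩ := List.mem_map.mp ha
    exact dist_nonneg

lemma le_chainDist_s4 {α : K → X → X} {x y : X} {c : ℝ}
    (h : ∀ l, IsChainFrom α x y l → c ≤ (l.map fun p => dist p.1 p.2).sum) :
    c ≤ chainDist α x y :=
  le_csInf ⟨_, _, .singleton α x y, rfl⟩ (by rintro _ ⟨l, hl, rfl⟩; exact h l hl)

theorem chainDist_map_le {α : K → X → X} {β : K → Y → Y} {f : X → Y}
    (hf : ∀ k x, f (α k x) = β k (f x)) {L : ℝ} (hL : 0 < L)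
    (hfL : ∀ a b, dist (f a) (f b) ≤ L * dist a b) (x y : X) :
    chainDist β (f x) (f y) ≤ L * chainDist α x y := by
  rw [← div_le_iff₀' hL]
  refine le_chainDist_s4 fun l hl => (div_le_iff₀' hL).mpr ?_
  calc chainDist β (f x) (f y)
      ≤ ((l.map (Prod.map f f)).map fun p => dist p.1 p.2).sum := chainDist_le_s4 (hl.map hf)
    _ = (l.map fun p => dist (f p.1) (f p.2)).sum := by rw [List.map_map]; rfl
    _ ≤ (l.map fun p => L * dist p.1 p.2).sum := List.sum_le_sum fun p _ => hfL p.1 p.2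
    _ = L * (l.map fun p => dist p.1 p.2).sum := List.sum_map_mul_left ..

end ChainDist

theorem quotient_biLipschitz_of_biLipschitz_space_general
    {G X Y : Type*} [MetricSpace X] [MetricSpace Y]
    (F : X ≃ Y) (C : ℝ) (hC : 1 ≤ C)
    (hbil : ∀ x y : X, dist x y / C ≤ dist (F x) (F y) ∧
      dist (F x) (F y) ≤ C * dist x y)
    (α : G → X → X) :
    (∀ x y : X, (∃ g, α g x = y) ↔
      (∃ g, F (α g (F.symm (F x))) = F y)) ∧
    (∀ x y : X,
      chainDist α x y / C ≤
        chainDist (fun (g : G) (z : Y) => F (α g (F.symm z))) (F x) (F y) ∧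
      chainDist (fun (g : G) (z : Y) => F (α g (F.symm z))) (F x) (F y) ≤
        C * chainDist α x y) := by
  have hC0 : 0 < C := one_pos.trans_le hC
  refine ⟨fun x y => by simp, fun x y => ⟨?_, ?_⟩⟩
  · have hsymm : ∀ a b, dist (F.symm a) (F.symm b) ≤ C * dist a b := fun a b => by
      simpa [div_le_iff₀' hC0] using (hbil (F.symm a) (F.symm b)).1
    rw [div_le_iff₀' hC0]
    simpa using chainDist_map_le (f := F.symm) (by simp) hC0 hsymm (F x) (F y)
  · exact chainDist_map_le (by simp) hC0 (fun a b => (hbil a b).2) x y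

/-- If `X`, `Y` are uniformly discrete, `F : X → Y` is a
`C`-bi-Lipschitz bijection and `G` acts translation-like on `X`, then with the
induced action `g·y = F (g · F⁻¹ y)` on `Y`, `F` maps `G`-orbits to `G`-orbits
(hence descends to a bijection `X/G → Y/G`) and
`(1/C) d_{X/G} ≤ d_{Y/G} ∘ F̄ ≤ C d_{X/G}`; in particular `X/G` and `Y/G` are
bi-Lipschitz. -/
theorem quotient_biLipschitz_of_biLipschitz_space
    {G X Y : Type*} [Group G] [MetricSpace X] [MetricSpace Y]
    (hudX : ∃ ε > (0 : ℝ), ∀ x y : X, x ≠ y → ε ≤ dist x y)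
    (hudY : ∃ ε > (0 : ℝ), ∀ x y : Y, x ≠ y → ε ≤ dist x y)
    (F : X ≃ Y) (C : ℝ) (hC : 1 ≤ C)
    (hbil : ∀ x y : X, dist x y / C ≤ dist (F x) (F y) ∧
      dist (F x) (F y) ≤ C * dist x y)
    (α : G → X → X) (hα : RightTranslationLike α) :
    (∀ x y : X, (∃ g, α g x = y) ↔
      (∃ g, F (α g (F.symm (F x))) = F y)) ∧
    (∀ x y : X,
      chainDist α x y / C ≤
        chainDist (fun (g : G) (z : Y) => F (α g (F.symm z))) (F x) (F y) ∧
      chainDist (fun (g : G) (z : Y) => F (α g (F.symm z))) (F x) (F y) ≤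
        C * chainDist α x y) :=
  quotient_biLipschitz_of_biLipschitz_space_general F C hC hbil α
end

section
/- Let (X₁,d₁) and (X₂,d₂) be non-amenable UDBG spaces and f : X₁ → X₂ a quasi-isometry. Then there exists a bi-Lipschitz bijection F : X₁ → X₂ with sup_{x∈X₁} d₂(f(x), F(x)) < ∞. -/
/-- Uniform discreteness: the infimum of distances between distinct points is
positive. -/
def UniformlyDiscrete (X : Type*) [MetricSpace X] : Prop :=
  ∃ ε > (0 : ℝ), ∀ x y : X, x ≠ y → ε ≤ dist x y

/-- Bounded geometry: balls of any fixed radius have uniformly bounded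
cardinality. -/
def BoundedGeometry (X : Type*) [MetricSpace X] : Prop :=
  ∀ R : ℝ, 0 < R → ∃ C : ℕ, ∀ x : X,
    (Metric.closedBall x R).Finite ∧ (Metric.closedBall x R).ncard ≤ C

/-- The `R`-boundary of a subset `S`. -/
def rBoundary {X : Type*} [MetricSpace X] (S : Set X) (R : ℝ) : Set X :=
  {x | x ∉ S ∧ ∃ y ∈ S, dist x y ≤ R}

/-- A Følner sequence: finite nonempty sets whose relative `R`-boundary tends
to `0` for every `R`. -/
def IsFolnerSeq {X : Type*} [MetricSpace X] (Fs : ℕ → Set X) : Prop :=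
  (∀ n, (Fs n).Finite ∧ (Fs n).Nonempty) ∧
  ∀ R : ℝ, 0 < R →
    Filter.Tendsto
      (fun n => ((rBoundary (Fs n) R).ncard : ℝ) / ((Fs n).ncard : ℝ))
      Filter.atTop (nhds 0)

/-- A UDBG space is non-amenable if it admits no Følner sequence. -/
def NonAmenable (X : Type*) [MetricSpace X] : Prop :=
  ¬ ∃ Fs : ℕ → Set X, IsFolnerSeq Fs

open Set Function Metric

section Aux

variable {X : Type*} [MetricSpace X]

/-- The closed `R`-neighborhood of a set. -/
def nbhd (S : Set X) (R : ℝ) : Set X := {z | ∃ y ∈ S, dist z y ≤ R}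

lemma subset_nbhd {S : Set X} {R : ℝ} (hR : 0 ≤ R) : S ⊆ nbhd S R :=
  fun x hx => ⟨x, hx, by simpa using hR⟩

lemma rBoundary_subset_nbhd (S : Set X) (R : ℝ) : rBoundary S R ⊆ nbhd S R :=
  fun _ hx => hx.2

lemma nbhd_finite (hbg : BoundedGeometry X) {S : Set X} (hS : S.Finite) (R : ℝ) :
    (nbhd S R).Finite := by
  obtain ⟨c, hc⟩ := hbg (max R 1) (lt_of_lt_of_le one_pos (le_max_right _ _))
  have hsub : nbhd S R ⊆ ⋃ y ∈ S, Metric.closedBall y (max R 1) := by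
    rintro z ⟨y, hy, hz⟩
    exact Set.mem_biUnion hy (Metric.mem_closedBall.2 (hz.trans (le_max_left _ _)))
  exact (hS.biUnion fun y _ => (hc y).1).subset hsub

lemma rBoundary_finite (hbg : BoundedGeometry X) {S : Set X} (hS : S.Finite) (R : ℝ) :
    (rBoundary S R).Finite :=
  (nbhd_finite hbg hS R).subset (rBoundary_subset_nbhd S R)

/-- Non-amenability gives a uniform expansion constant. -/
lemma exists_expansion (hbg : BoundedGeometry X) (hna : NonAmenable X) :
    ∃ n : ℕ, 0 < n ∧ ∀ S : Set X, S.Finite → S.Nonempty →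
      (S.ncard : ℝ) ≤ n * (rBoundary S (n : ℝ)).ncard := by
  by_contra hcon
  push_neg at hcon
  apply hna
  have h' : ∀ n : ℕ, ∃ S : Set X, S.Finite ∧ S.Nonempty ∧
      ((n + 1 : ℕ) : ℝ) * (rBoundary S ((n + 1 : ℕ) : ℝ)).ncard < S.ncard := by
    intro n
    exact hcon (n + 1) n.succ_pos
  choose T hTfin hTne hTlt using h'
  refine ⟨T, ⟨fun n => ⟨hTfin n, hTne n⟩, ?_⟩⟩
  intro R hR
  have hub : Filter.Tendsto (fun n : ℕ => (1 : ℝ) / (n + 1)) Filter.atTop (nhds 0) :=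
    tendsto_one_div_add_atTop_nhds_zero_nat
  refine tendsto_of_tendsto_of_tendsto_of_le_of_le' tendsto_const_nhds hub ?_ ?_
  · exact Filter.Eventually.of_forall fun n =>
      div_nonneg (Nat.cast_nonneg _) (Nat.cast_nonneg _)
  · obtain ⟨N, hN⟩ := exists_nat_ge R
    filter_upwards [Filter.eventually_ge_atTop N] with n hn
    have hRn : R ≤ ((n + 1 : ℕ) : ℝ) := by
      refine hN.trans ?_
      exact_mod_cast Nat.le_succ_of_le hn
    have hsub : rBoundary (T n) R ⊆ rBoundary (T n) ((n + 1 : ℕ) : ℝ) := by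
      rintro x ⟨hx1, y, hy, hxy⟩
      exact ⟨hx1, y, hy, hxy.trans hRn⟩
    have hfin : (rBoundary (T n) ((n + 1 : ℕ) : ℝ)).Finite :=
      rBoundary_finite hbg (hTfin n) _
    have hle : ((rBoundary (T n) R).ncard : ℝ) ≤
        ((rBoundary (T n) ((n + 1 : ℕ) : ℝ)).ncard : ℝ) := by
      exact_mod_cast Set.ncard_le_ncard hsub hfin
    have hpos : (0 : ℝ) < (T n).ncard := by
      exact_mod_cast (Set.ncard_pos (hTfin n)).2 (hTne n)
    have hn1 : (0 : ℝ) < ((n : ℝ) + 1) := by positivity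
    rw [div_le_div_iff₀ hpos hn1]
    have := hTlt n
    push_cast at this hle ⊢
    nlinarith
  done

/-- Iterated expansion: neighborhoods grow exponentially. -/
lemma nbhd_iterate (hbg : BoundedGeometry X) {n : ℕ} (hn : 0 < n)
    (hexp : ∀ S : Set X, S.Finite → S.Nonempty →
      (S.ncard : ℝ) ≤ n * (rBoundary S (n : ℝ)).ncard)
    (k : ℕ) {S : Set X} (hS : S.Finite) (hSne : S.Nonempty) :
    (1 + 1 / (n : ℝ)) ^ k * S.ncard ≤ ((nbhd S ((k : ℝ) * n)).ncard : ℝ) := by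
  have hnR : (0 : ℝ) < n := by exact_mod_cast hn
  induction k with
  | zero =>
    simp only [pow_zero, one_mul, Nat.cast_zero, zero_mul]
    exact_mod_cast Set.ncard_le_ncard (subset_nbhd le_rfl) (nbhd_finite hbg hS 0)
  | succ k ih =>
    set T : Set X := nbhd S ((k : ℝ) * n) with hT
    have hTfin : T.Finite := nbhd_finite hbg hS _
    have hTne : T.Nonempty := hSne.mono (subset_nbhd (by positivity))
    have hTpos : (0 : ℝ) ≤ T.ncard := Nat.cast_nonneg _
    have hbd : ((T.ncard : ℝ)) ≤ n * (rBoundary T (n : ℝ)).ncard := hexp T hTfin hTne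
    have hdisj : Disjoint T (rBoundary T (n : ℝ)) := by
      rw [Set.disjoint_left]
      rintro x hx ⟨hx', _⟩
      exact hx' hx
    have hbfin : (rBoundary T (n : ℝ)).Finite := rBoundary_finite hbg hTfin _
    have hunion : (T ∪ rBoundary T (n : ℝ)).ncard = T.ncard + (rBoundary T (n : ℝ)).ncard :=
      Set.ncard_union_eq hdisj hTfin hbfin
    have hsub1 : T ∪ rBoundary T (n : ℝ) ⊆ nbhd T (n : ℝ) :=
      Set.union_subset (subset_nbhd hnR.le) (rBoundary_subset_nbhd T _)
    have hsub2 : nbhd T (n : ℝ) ⊆ nbhd S (((k + 1 : ℕ) : ℝ) * n) := by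
      rintro z ⟨y, ⟨s, hs, hys⟩, hzy⟩
      refine ⟨s, hs, ?_⟩
      have := dist_triangle z y s
      push_cast
      nlinarith
    have hNfin : (nbhd S (((k + 1 : ℕ) : ℝ) * n)).Finite := nbhd_finite hbg hS _
    have hchain : ((T ∪ rBoundary T (n : ℝ)).ncard : ℝ) ≤
        ((nbhd S (((k + 1 : ℕ) : ℝ) * n)).ncard : ℝ) := by
      exact_mod_cast Set.ncard_le_ncard (hsub1.trans hsub2) hNfin
    have hgrow : (1 + 1 / (n : ℝ)) * T.ncard ≤ ((T ∪ rBoundary T (n : ℝ)).ncard : ℝ) := by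
      rw [hunion]
      push_cast
      have h1 : (1 + 1 / (n : ℝ)) * T.ncard = T.ncard + T.ncard / n := by ring
      rw [h1]
      have h2 : (T.ncard : ℝ) / n ≤ (rBoundary T (n : ℝ)).ncard := by
        rw [div_le_iff₀ hnR]
        nlinarith
      linarith
    have hmono : (1 + 1 / (n : ℝ)) ^ (k + 1) * S.ncard ≤
        (1 + 1 / (n : ℝ)) * T.ncard := by
      have hpos1 : (0 : ℝ) < 1 + 1 / (n : ℝ) := by positivity
      calc (1 + 1 / (n : ℝ)) ^ (k + 1) * S.ncard
          = (1 + 1 / (n : ℝ)) * ((1 + 1 / (n : ℝ)) ^ k * S.ncard) := by ring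
        _ ≤ (1 + 1 / (n : ℝ)) * T.ncard := by
            exact mul_le_mul_of_nonneg_left ih hpos1.le
    exact hmono.trans (hgrow.trans hchain)

end Aux

/-- Counting lemma: if all fibers of `g` on `S` have at most `D` elements,
then `|S| ≤ D * |g '' S|`. -/
lemma ncard_le_mul_ncard_image {α β : Type*} {S : Set β} (hS : S.Finite) (g : β → α)
    (D : ℕ) (hD : ∀ a : α, (S ∩ g ⁻¹' {a}).ncard ≤ D) :
    S.ncard ≤ D * (g '' S).ncard := by
  classical
  have hfin : ∀ a : α, (S ∩ g ⁻¹' {a}).Finite := fun a => hS.inter_of_left _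
  set s : Finset β := hS.toFinset with hs
  have himg : (g '' S).ncard = (s.image g).card := by
    rw [← hS.toFinset_image, Set.ncard_eq_toFinset_card _ (hS.image g)]
  have hsub : s ⊆ (s.image g).biUnion (fun a => s.filter (fun x => g x = a)) := by
    intro x hx
    refine Finset.mem_biUnion.2 ⟨g x, Finset.mem_image_of_mem g hx, ?_⟩
    exact Finset.mem_filter.2 ⟨hx, rfl⟩
  have hcard : s.card ≤ (s.image g).card * D := by
    calc s.card ≤ ((s.image g).biUnion (fun a => s.filter (fun x => g x = a))).card :=
          Finset.card_le_card hsub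
      _ ≤ ∑ a ∈ s.image g, (s.filter (fun x => g x = a)).card :=
          Finset.card_biUnion_le
      _ ≤ (s.image g).card • D := by
          refine Finset.sum_le_card_nsmul _ _ D fun a _ => ?_
          have heq : s.filter (fun x => g x = a) = (hfin a).toFinset := by
            ext x
            simp [hs, Set.Finite.mem_toFinset, Set.mem_inter_iff]
          rw [heq, ← Set.ncard_eq_toFinset_card _ (hfin a)]
          exact hD a
      _ = (s.image g).card * D := by rw [smul_eq_mul]
  rw [Set.ncard_eq_toFinset_card _ hS, himg, mul_comm]
  exact hcard

/-- Schröder–Bernstein with the extra property that the bijection pointwise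
agrees with `g` or is a right inverse value of `h`. -/
lemma schroeder_bernstein_prop {α β : Type*} {g : α → β} {h : β → α}
    (hg : Function.Injective g) (hh : Function.Injective h) :
    ∃ F : α → β, Function.Bijective F ∧ ∀ x, F x = g x ∨ h (F x) = x := by
  classical
  cases' isEmpty_or_nonempty β with hβ hβ
  · have hα : IsEmpty α := Function.isEmpty g
    exact ⟨g, ⟨hg, fun y => (hβ.false y).elim⟩, fun x => (hα.false x).elim⟩
  set Φ : Set α →o Set α :=
    { toFun := fun s => (h '' (g '' s)ᶜ)ᶜ
      monotone' := fun s t hst =>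
        compl_subset_compl.mpr <| Set.image_mono <|
          compl_subset_compl.mpr <| Set.image_mono hst }
  set s : Set α := Φ.lfp with hs_def
  have hs : (h '' (g '' s)ᶜ)ᶜ = s := Φ.map_lfp
  have hns : h '' (g '' s)ᶜ = sᶜ := compl_injective (by simp [hs])
  set h' := Function.invFun h with hh'
  have h'h : Function.LeftInverse h' h := Function.leftInverse_invFun hh
  have hh'ns : h' '' sᶜ = (g '' s)ᶜ := by rw [← hns, h'h.image_image]
  set F : α → β := s.piecewise g h' with hF
  have hsurj : Function.Surjective F := by
    rw [← Set.range_eq_univ, hF, Set.range_piecewise, hh'ns, Set.union_compl_self]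
  have hinj : Function.Injective F := by
    rw [hF]
    refine (Set.injective_piecewise_iff _).2 ⟨hg.injOn, ?_, ?_⟩
    · intro x hx y hy hxy
      obtain ⟨x', _, rfl⟩ : x ∈ h '' (g '' s)ᶜ := by rwa [hns]
      obtain ⟨y', _, rfl⟩ : y ∈ h '' (g '' s)ᶜ := by rwa [hns]
      rw [h'h _, h'h _] at hxy
      rw [hxy]
    · intro x hx y hy hxy
      obtain ⟨y', hy', rfl⟩ : y ∈ h '' (g '' s)ᶜ := by rwa [hns]
      rw [h'h _] at hxy
      exact hy' ⟨x, hx, hxy⟩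
  refine ⟨F, ⟨hinj, hsurj⟩, fun x => ?_⟩
  by_cases hx : x ∈ s
  · left
    simp [hF, Set.piecewise_eq_of_mem _ _ _ hx]
  · right
    have hFx : F x = h' x := Set.piecewise_eq_of_notMem _ _ _ hx
    obtain ⟨y, _, rfl⟩ : x ∈ h '' (g '' s)ᶜ := by rwa [hns]
    rw [hFx, h'h y]

set_option maxHeartbeats 3200000 in
/-- A quasi-isometry between non-amenable UDBG spaces is bounded
distance from a bi-Lipschitz bijection. -/
theorem quasiIsometry_close_to_biLipschitz_of_nonamenable
    {X₁ X₂ : Type*} [MetricSpace X₁] [MetricSpace X₂]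
    (h₁ud : UniformlyDiscrete X₁) (h₁bg : BoundedGeometry X₁)
    (h₁na : NonAmenable X₁)
    (h₂ud : UniformlyDiscrete X₂) (h₂bg : BoundedGeometry X₂)
    (h₂na : NonAmenable X₂)
    (f : X₁ → X₂) (A B C : ℝ) (hA : 1 ≤ A) (hB : 0 ≤ B) (hC : 0 ≤ C)
    (hqi : ∀ x y : X₁, dist x y / A - B ≤ dist (f x) (f y) ∧
      dist (f x) (f y) ≤ A * dist x y + B)
    (hdense : ∀ z : X₂, ∃ x : X₁, dist z (f x) ≤ C) :
    ∃ F : X₁ → X₂, Function.Bijective F ∧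
      (∃ K ≥ (1 : ℝ), ∀ x y : X₁,
        dist x y / K ≤ dist (F x) (F y) ∧ dist (F x) (F y) ≤ K * dist x y) ∧
      ∃ M : ℝ, ∀ x : X₁, dist (f x) (F x) ≤ M := by
  classical
  have hA0 : (0 : ℝ) < A := lt_of_lt_of_le one_pos hA
  obtain ⟨ε₁, hε₁, hud₁⟩ := h₁ud
  obtain ⟨ε₂, hε₂, hud₂⟩ := h₂ud
  -- expansion constants
  obtain ⟨n₁, hn₁, hexp₁⟩ := exists_expansion h₁bg h₁na
  obtain ⟨n₂, hn₂, hexp₂⟩ := exists_expansion h₂bg h₂na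
  -- multiplicity bound for fibers of f
  obtain ⟨D₁, hD₁⟩ := h₁bg (A * B + 1) (by nlinarith)
  -- key fiber bound: points with the same image are within A*B
  have hfiber : ∀ x y : X₁, f x = f y → dist x y ≤ A * B := by
    intro x y hxy
    have h1 := (hqi x y).1
    rw [hxy, dist_self] at h1
    have h2 : dist x y / A ≤ B := by linarith
    calc dist x y = A * (dist x y / A) := by field_simp
      _ ≤ A * B := by nlinarith [dist_nonneg (x := x) (y := y)]
  -- choice of dense preimages
  choose sel hsel using hdense
  obtain ⟨D₂, hD₂⟩ := h₂bg (2 * C + 1) (by nlinarith)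
  have hselmult : ∀ z w : X₂, sel z = sel w → dist z w ≤ 2 * C := by
    intro z w hzw
    calc dist z w ≤ dist z (f (sel z)) + dist (f (sel w)) w := by
          rw [hzw]; exact dist_triangle z (f (sel w)) w
      _ ≤ C + C := add_le_add (hsel z) (by rw [dist_comm]; exact hsel w)
      _ = 2 * C := by ring
  -- powers beating the multiplicity constants
  obtain ⟨k₂, hk₂⟩ := pow_unbounded_of_one_lt (D₁ : ℝ)
    (by rw [lt_add_iff_pos_right]; positivity : (1 : ℝ) < 1 + 1 / (n₂ : ℝ))
  obtain ⟨k₁, hk₁⟩ := pow_unbounded_of_one_lt (D₂ : ℝ)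
    (by rw [lt_add_iff_pos_right]; positivity : (1 : ℝ) < 1 + 1 / (n₁ : ℝ))
  set R₁ : ℝ := (k₂ : ℝ) * n₂ + 1 with hR₁def
  have hR₁0 : (0 : ℝ) < R₁ := by positivity
  set R₂ : ℝ := A * ((k₁ : ℝ) * n₁) + B + C + 1 with hR₂def
  have hR₂0 : (0 : ℝ) < R₂ := by positivity
  -- candidate Finsets for Hall's theorem, side 1
  obtain ⟨E₂, hE₂⟩ := h₂bg R₁ hR₁0
  set t₁ : X₁ → Finset X₂ := fun x => (hE₂ (f x)).1.toFinset with ht₁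
  have hmem₁ : ∀ x z, z ∈ t₁ x ↔ dist z (f x) ≤ R₁ := by
    intro x z
    simp [ht₁, Set.Finite.mem_toFinset, Metric.mem_closedBall]
  -- Hall condition, side 1
  have hall₁ : ∀ s : Finset X₁, s.card ≤ (s.biUnion t₁).card := by
    intro s
    rcases s.eq_empty_or_nonempty with rfl | hsne
    · simp
    have hsfin : (↑s : Set X₁).Finite := s.finite_toSet
    set W : Set X₂ := f '' ↑s with hW
    have hWfin : W.Finite := hsfin.image f
    have hWne : W.Nonempty := hsne.to_set.image f
    -- |s| ≤ D₁ * |W|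
    have hstep1 : (↑s : Set X₁).ncard ≤ D₁ * W.ncard := by
      refine ncard_le_mul_ncard_image hsfin f D₁ fun a => ?_
      rcases (↑s ∩ f ⁻¹' {a} : Set X₁).eq_empty_or_nonempty with he | ⟨x₀, hx₀⟩
      · simp [he]
      have hsub : (↑s ∩ f ⁻¹' {a} : Set X₁) ⊆ Metric.closedBall x₀ (A * B + 1) := by
        rintro x ⟨_, hx2⟩
        have : f x = f x₀ := by
          rw [Set.mem_preimage, Set.mem_singleton_iff] at hx2
          rw [hx2]
          have := hx₀.2
          rw [Set.mem_preimage, Set.mem_singleton_iff] at this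
          rw [this]
        have := hfiber x x₀ this
        exact Metric.mem_closedBall.2 (by linarith)
      exact (Set.ncard_le_ncard hsub (hD₁ x₀).1).trans (hD₁ x₀).2
    -- expansion
    have hexp := nbhd_iterate h₂bg hn₂ hexp₂ k₂ hWfin hWne
    -- nbhd W (k₂ * n₂) ⊆ biUnion
    have hsub2 : nbhd W ((k₂ : ℝ) * n₂) ⊆ ↑(s.biUnion t₁) := by
      rintro z ⟨y, ⟨x, hx, rfl⟩, hzy⟩
      refine Finset.mem_coe.2 (Finset.mem_biUnion.2 ⟨x, hx, ?_⟩)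
      rw [hmem₁]
      rw [hR₁def]
      linarith
    have hcast : ((nbhd W ((k₂ : ℝ) * n₂)).ncard : ℝ) ≤ ((s.biUnion t₁).card : ℝ) := by
      have := Set.ncard_le_ncard hsub2 (s.biUnion t₁).finite_toSet
      rw [Set.ncard_coe_finset] at this
      exact_mod_cast this
    have hWpos : (0 : ℝ) ≤ (W.ncard : ℝ) := Nat.cast_nonneg _
    have hchain : (s.card : ℝ) ≤ ((s.biUnion t₁).card : ℝ) := by
      have h1 : (s.card : ℝ) ≤ (D₁ : ℝ) * W.ncard := by
        rw [← Set.ncard_coe_finset s]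
        exact_mod_cast hstep1
      have h2 : (D₁ : ℝ) * W.ncard ≤ (1 + 1 / (n₂ : ℝ)) ^ k₂ * W.ncard :=
        mul_le_mul_of_nonneg_right hk₂.le hWpos
      linarith
    exact_mod_cast hchain
  obtain ⟨g, hginj, hgmem⟩ :=
    (Finset.all_card_le_biUnion_card_iff_exists_injective t₁).1 hall₁
  have hg : ∀ x, dist (g x) (f x) ≤ R₁ := fun x => (hmem₁ x (g x)).1 (hgmem x)
  -- side 2
  have ht₂fin : ∀ z : X₂, {x : X₁ | dist (f x) z ≤ R₂}.Finite := by
    intro z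
    obtain ⟨E₁, hE₁⟩ := h₁bg (A * (R₂ + C + B) + 1) (by positivity)
    refine (hE₁ (sel z)).1.subset ?_
    intro x hx
    have hx' : dist (f x) z ≤ R₂ := hx
    have hd : dist (f x) (f (sel z)) ≤ R₂ + C := by
      calc dist (f x) (f (sel z)) ≤ dist (f x) z + dist z (f (sel z)) := dist_triangle _ _ _
        _ ≤ R₂ + C := add_le_add hx' (hsel z)
    have hq := (hqi x (sel z)).1
    have : dist x (sel z) / A ≤ R₂ + C + B := by linarith
    have hdx : dist x (sel z) ≤ A * (R₂ + C + B) := by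
      calc dist x (sel z) = A * (dist x (sel z) / A) := by field_simp
        _ ≤ A * (R₂ + C + B) := by nlinarith [dist_nonneg (x := x) (y := sel z)]
    exact Metric.mem_closedBall.2 (by linarith)
  set t₂ : X₂ → Finset X₁ := fun z => (ht₂fin z).toFinset with ht₂
  have hmem₂ : ∀ z x, x ∈ t₂ z ↔ dist (f x) z ≤ R₂ := by
    intro z x
    simp [ht₂, Set.Finite.mem_toFinset]
  have hall₂ : ∀ s : Finset X₂, s.card ≤ (s.biUnion t₂).card := by
    intro s
    rcases s.eq_empty_or_nonempty with rfl | hsne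
    · simp
    have hsfin : (↑s : Set X₂).Finite := s.finite_toSet
    set S : Set X₁ := sel '' ↑s with hS
    have hSfin : S.Finite := hsfin.image sel
    have hSne : S.Nonempty := hsne.to_set.image sel
    have hstep1 : (↑s : Set X₂).ncard ≤ D₂ * S.ncard := by
      refine ncard_le_mul_ncard_image hsfin sel D₂ fun a => ?_
      rcases (↑s ∩ sel ⁻¹' {a} : Set X₂).eq_empty_or_nonempty with he | ⟨z₀, hz₀⟩
      · simp [he]
      have hsub : (↑s ∩ sel ⁻¹' {a} : Set X₂) ⊆ Metric.closedBall z₀ (2 * C + 1) := by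
        rintro z ⟨_, hz2⟩
        have hzz : sel z = sel z₀ := by
          rw [Set.mem_preimage, Set.mem_singleton_iff] at hz2
          have h2 := hz₀.2
          rw [Set.mem_preimage, Set.mem_singleton_iff] at h2
          rw [hz2, h2]
        have := hselmult z z₀ hzz
        exact Metric.mem_closedBall.2 (by linarith)
      exact (Set.ncard_le_ncard hsub (hD₂ z₀).1).trans (hD₂ z₀).2
    have hexp := nbhd_iterate h₁bg hn₁ hexp₁ k₁ hSfin hSne
    have hsub2 : nbhd S ((k₁ : ℝ) * n₁) ⊆ ↑(s.biUnion t₂) := by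
      rintro x ⟨y, ⟨z, hz, rfl⟩, hxy⟩
      refine Finset.mem_coe.2 (Finset.mem_biUnion.2 ⟨z, hz, ?_⟩)
      rw [hmem₂]
      have h1 : dist (f x) (f (sel z)) ≤ A * ((k₁ : ℝ) * n₁) + B := by
        have := (hqi x (sel z)).2
        have hd : dist x (sel z) ≤ (k₁ : ℝ) * n₁ := hxy
        nlinarith
      calc dist (f x) z ≤ dist (f x) (f (sel z)) + dist (f (sel z)) z := dist_triangle _ _ _
        _ ≤ (A * ((k₁ : ℝ) * n₁) + B) + C := by
            refine add_le_add h1 ?_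
            rw [dist_comm]; exact hsel z
        _ ≤ R₂ := by rw [hR₂def]; linarith
    have hcast : ((nbhd S ((k₁ : ℝ) * n₁)).ncard : ℝ) ≤ ((s.biUnion t₂).card : ℝ) := by
      have := Set.ncard_le_ncard hsub2 (s.biUnion t₂).finite_toSet
      rw [Set.ncard_coe_finset] at this
      exact_mod_cast this
    have hSpos : (0 : ℝ) ≤ (S.ncard : ℝ) := Nat.cast_nonneg _
    have hchain : (s.card : ℝ) ≤ ((s.biUnion t₂).card : ℝ) := by
      have h1 : (s.card : ℝ) ≤ (D₂ : ℝ) * S.ncard := by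
        rw [← Set.ncard_coe_finset s]
        exact_mod_cast hstep1
      have h2 : (D₂ : ℝ) * S.ncard ≤ (1 + 1 / (n₁ : ℝ)) ^ k₁ * S.ncard :=
        mul_le_mul_of_nonneg_right hk₁.le hSpos
      linarith
    exact_mod_cast hchain
  obtain ⟨h, hhinj, hhmem⟩ :=
    (Finset.all_card_le_biUnion_card_iff_exists_injective t₂).1 hall₂
  have hh : ∀ z, dist (f (h z)) z ≤ R₂ := fun z => (hmem₂ z (h z)).1 (hhmem z)
  -- Schröder–Bernstein
  obtain ⟨F, hFbij, hFprop⟩ := schroeder_bernstein_prop hginj hhinj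
  set M : ℝ := max R₁ R₂ with hM
  have hM0 : 0 < M := lt_max_of_lt_left hR₁0
  have hclose : ∀ x, dist (f x) (F x) ≤ M := by
    intro x
    rcases hFprop x with hFx | hFx
    · rw [hFx, dist_comm]
      exact (hg x).trans (le_max_left _ _)
    · have := hh (F x)
      rw [hFx] at this
      exact this.trans (le_max_right _ _)
  refine ⟨F, hFbij, ?_, M, hclose⟩
  -- bi-Lipschitz constant
  set K : ℝ := A + (B + 2 * M) / ε₁ + A * (1 + (2 * M + B) / ε₂) with hK
  have hK1 : (1 : ℝ) ≤ K := by
    have h1 : (0 : ℝ) ≤ (B + 2 * M) / ε₁ := div_nonneg (by linarith) hε₁.le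
    have h2 : (0 : ℝ) ≤ A * (1 + (2 * M + B) / ε₂) := by
      have : (0 : ℝ) ≤ (2 * M + B) / ε₂ := div_nonneg (by linarith) hε₂.le
      nlinarith
    rw [hK]; linarith
  have hK0 : (0 : ℝ) < K := lt_of_lt_of_le one_pos hK1
  refine ⟨K, hK1, fun x y => ?_⟩
  rcases eq_or_ne x y with rfl | hxy
  · simp [hK0.le]
  constructor
  · -- lower bound
    have hFne : F x ≠ F y := fun hc => hxy (hFbij.1 hc)
    have hFd : ε₂ ≤ dist (F x) (F y) := hud₂ _ _ hFne
    have hq := (hqi x y).1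
    have htr : dist (f x) (f y) ≤ dist (F x) (F y) + 2 * M := by
      calc dist (f x) (f y) ≤ dist (f x) (F x) + dist (F x) (F y) + dist (F y) (f y) :=
            dist_triangle4 _ _ _ _
        _ ≤ M + dist (F x) (F y) + M := by
            refine add_le_add (add_le_add (hclose x) le_rfl) ?_
            rw [dist_comm]; exact hclose y
        _ = dist (F x) (F y) + 2 * M := by ring
    have hdxy : dist x y ≤ A * (dist (F x) (F y) + 2 * M + B) := by
      have h1 : dist x y / A ≤ dist (F x) (F y) + 2 * M + B := by linarith
      calc dist x y = A * (dist x y / A) := by field_simp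
        _ ≤ A * (dist (F x) (F y) + 2 * M + B) := by nlinarith [dist_nonneg (x := x) (y := y)]
    rw [div_le_iff₀ hK0]
    have hstep : A * (dist (F x) (F y) + 2 * M + B) ≤
        A * (1 + (2 * M + B) / ε₂) * dist (F x) (F y) := by
      have hkey : 2 * M + B ≤ (2 * M + B) / ε₂ * dist (F x) (F y) := by
        have h3 : (0:ℝ) ≤ (2 * M + B) / ε₂ := div_nonneg (by linarith) hε₂.le
        have h4 : (2 * M + B) / ε₂ * ε₂ = 2 * M + B := div_mul_cancel₀ _ hε₂.ne'
        nlinarith [mul_le_mul_of_nonneg_left hFd h3]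
      nlinarith [dist_nonneg (x := F x) (y := F y)]
    have hKge : A * (1 + (2 * M + B) / ε₂) ≤ K := by
      have h1 : (0 : ℝ) ≤ A := hA0.le
      have h2 : (0 : ℝ) ≤ (B + 2 * M) / ε₁ := by positivity
      rw [hK]
      linarith
    calc dist x y ≤ A * (1 + (2 * M + B) / ε₂) * dist (F x) (F y) := hdxy.trans hstep
      _ ≤ K * dist (F x) (F y) := by
          exact mul_le_mul_of_nonneg_right hKge dist_nonneg
      _ = dist (F x) (F y) * K := mul_comm _ _
  · -- upper bound
    have hxyd : ε₁ ≤ dist x y := hud₁ _ _ hxy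
    have hq := (hqi x y).2
    have htr : dist (F x) (F y) ≤ dist (f x) (f y) + 2 * M := by
      calc dist (F x) (F y) ≤ dist (F x) (f x) + dist (f x) (f y) + dist (f y) (F y) :=
            dist_triangle4 _ _ _ _
        _ ≤ M + dist (f x) (f y) + M := by
            refine add_le_add (add_le_add ?_ le_rfl) (hclose y)
            rw [dist_comm]; exact hclose x
        _ = dist (f x) (f y) + 2 * M := by ring
    have hkey : B + 2 * M ≤ (B + 2 * M) / ε₁ * dist x y := by
      have h3 : (0:ℝ) ≤ (B + 2 * M) / ε₁ := div_nonneg (by linarith) hε₁.le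
      have h4 : (B + 2 * M) / ε₁ * ε₁ = B + 2 * M := div_mul_cancel₀ _ hε₁.ne'
      nlinarith [mul_le_mul_of_nonneg_left hxyd h3]
    have hKge : A + (B + 2 * M) / ε₁ ≤ K := by
      have h2 : (0 : ℝ) ≤ A * (1 + (2 * M + B) / ε₂) := by positivity
      rw [hK]
      linarith
    calc dist (F x) (F y) ≤ A * dist x y + B + 2 * M := by linarith
      _ ≤ (A + (B + 2 * M) / ε₁) * dist x y := by nlinarith [dist_nonneg (x := x) (y := y)]
      _ ≤ K * dist x y := mul_le_mul_of_nonneg_right hKge dist_nonneg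
end

section
/- With the hypotheses of the previous statement and assuming additionally that Δ has polynomial growth (there exist C, d with |B_R(g) ∩ Δ| ≤ C R^d for all g ∈ Δ, R ≥ 1), the space X(Δ) = {(a, F_a(g)) : a ∈ ℤ^r, g ∈ Δ} has bounded geometry: for every r > 0 there is a constant C_r such that every ball of radius r in X(Δ) contains at most C_r points. Hence X(Δ) is a UDBG space. -/
lemma coord_abs_le {r : ℕ} (x y : EuclideanSpace ℝ (Fin r)) (i : Fin r) :
    |x i - y i| ≤ ‖x - y‖ := by
  rw [EuclideanSpace.norm_eq (x - y)]
  have h1 : |x i - y i| = Real.sqrt (‖(x - y) i‖^2) := by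
    rw [Real.sqrt_sq_eq_abs]; simp [abs_abs]
  rw [h1]
  apply Real.sqrt_le_sqrt
  exact Finset.single_le_sum (f := fun j => ‖(x-y) j‖^2) (fun j _ => by positivity)
    (Finset.mem_univ i)



/-- The point of `ℝ^r` with integer coordinates `m`. -/
noncomputable def intPt (r : ℕ) (m : Fin r → ℤ) : EuclideanSpace ℝ (Fin r) :=
  (WithLp.equiv 2 (Fin r → ℝ)).symm (fun i => (m i : ℝ))

lemma intPt_apply {r : ℕ} (m : Fin r → ℤ) (i : Fin r) : intPt r m i = (m i : ℝ) := rfl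

lemma intPt_inj {r : ℕ} {m m' : Fin r → ℤ} (h : intPt r m = intPt r m') : m = m' := by
  funext i
  have : ((m i : ℝ)) = (m' i : ℝ) := by
    have := congrArg (fun v : EuclideanSpace ℝ (Fin r) => v i) h
    simpa [intPt_apply] using this
  exact_mod_cast this

lemma intPt_sep {r : ℕ} {m m' : Fin r → ℤ} (h : m ≠ m') :
    (1 : ℝ) ≤ ‖intPt r m - intPt r m'‖ := by
  obtain ⟨i, hi⟩ := Function.ne_iff.mp h
  have h1 : (1 : ℝ) ≤ |(m i : ℝ) - (m' i : ℝ)| := by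
    have : 1 ≤ |m i - m' i| := Int.one_le_abs (by omega)
    calc (1:ℝ) ≤ (|m i - m' i| : ℤ) := by exact_mod_cast this
      _ = |((m i - m' i : ℤ) : ℝ)| := by rw [Int.cast_abs]
      _ = |(m i : ℝ) - (m' i : ℝ)| := by push_cast; ring_nf
  calc (1:ℝ) ≤ |(m i : ℝ) - (m' i : ℝ)| := h1
    _ = |intPt r m i - intPt r m' i| := by rw [intPt_apply, intPt_apply]
    _ ≤ _ := coord_abs_le _ _ i

/-- The net `X(Δ) = {(a, F_a g) : a ∈ ℤ^r, g ∈ Δ}` inside `ℝ^r × N`. -/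
def XSet (r : ℕ) {N : Type*} (Δ : Set N)
    (F : EuclideanSpace ℝ (Fin r) → N → N) :
    Set (EuclideanSpace ℝ (Fin r) × N) :=
  {p | ∃ (m : Fin r → ℤ) (g : N), g ∈ Δ ∧ p = (intPt r m, F (intPt r m) g)}

/-- With the hypotheses of Statement 13 (separation `> 1`, flat
lemma, logarithmic distortion, and `d_{G/K}` a metric-like distance), if `Δ`
moreover has polynomial growth then `X(Δ)` has bounded geometry: every
`ρ`-ball of `X(Δ)` contains at most `C_ρ` points.  Hence `X(Δ)` is a UDBG
space (uniformly discrete and of bounded geometry). -/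
theorem XSet_bounded_geometry
    (r : ℕ) {N : Type*} [MetricSpace N]
    (Δ : Set N) (hcount : Δ.Countable)
    (F : EuclideanSpace ℝ (Fin r) → N → N)
    (dGK : EuclideanSpace ℝ (Fin r) × N → EuclideanSpace ℝ (Fin r) × N → ℝ)
    (hsymm : ∀ p q, dGK p q = dGK q p)
    (htri : ∀ p q w, dGK p w ≤ dGK p q + dGK q w)
    (C₁ C₂ : ℝ) (hC₁ : 0 < C₁) (hC₂ : 0 < C₂)
    (hsep : ∃ s : ℝ, 1 < s ∧ ∀ x ∈ Δ, ∀ y ∈ Δ, x ≠ y → s ≤ dist x y)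
    (hflat : ∀ (x y : EuclideanSpace ℝ (Fin r)) (g h : N),
      x ≠ y → ‖x - y‖ ≤ dGK (x, g) (y, h))
    (hlog : ∀ (a : EuclideanSpace ℝ (Fin r)), ∀ x ∈ Δ, ∀ y ∈ Δ, x ≠ y →
      C₁ * Real.log (dist x y) ≤ dGK (a, F a x) (a, F a y) ∧
      dGK (a, F a x) (a, F a y) ≤ C₂ * Real.log (dist x y))
    (hgrowth : ∃ (Cg : ℝ) (dd : ℕ), ∀ g ∈ Δ, ∀ R : ℝ, 1 ≤ R →
      {h | h ∈ Δ ∧ dist g h ≤ R}.Finite ∧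
      ({h | h ∈ Δ ∧ dist g h ≤ R}.ncard : ℝ) ≤ Cg * R ^ dd) :
    (∃ ε > (0 : ℝ), ∀ p ∈ XSet r Δ F, ∀ q ∈ XSet r Δ F, p ≠ q → ε ≤ dGK p q) ∧
    (∀ ρ : ℝ, 0 < ρ → ∃ C : ℕ, ∀ p ∈ XSet r Δ F,
      {q | q ∈ XSet r Δ F ∧ dGK p q ≤ ρ}.Finite ∧
      {q | q ∈ XSet r Δ F ∧ dGK p q ≤ ρ}.ncard ≤ C) := by
  classical
  obtain ⟨s, hs1, hsepp⟩ := hsep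
  obtain ⟨Cg, dd, hg⟩ := hgrowth
  have hs0 : (0:ℝ) < s := by linarith
  constructor
  · refine ⟨min 1 (C₁ * Real.log s), lt_min one_pos (mul_pos hC₁ (Real.log_pos hs1)), ?_⟩
    rintro p ⟨m, g, hgΔ, rfl⟩ q ⟨m', h, hhΔ, rfl⟩ hne
    by_cases hmm : intPt r m = intPt r m'
    · have hm : m = m' := intPt_inj hmm
      subst hm
      have hgh : g ≠ h := by rintro rfl; exact hne rfl
      have hlow := (hlog (intPt r m) g hgΔ h hhΔ hgh).1
      calc min 1 (C₁ * Real.log s) ≤ C₁ * Real.log s := min_le_right _ _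
        _ ≤ C₁ * Real.log (dist g h) := by
            have := hsepp g hgΔ h hhΔ hgh
            have hlog' : Real.log s ≤ Real.log (dist g h) := by
              apply Real.log_le_log hs0 this
            nlinarith
        _ ≤ _ := hlow
    · have hmne : m ≠ m' := fun e => hmm (by rw [e])
      calc min 1 (C₁ * Real.log s) ≤ 1 := min_le_left _ _
        _ ≤ ‖intPt r m - intPt r m'‖ := intPt_sep hmne
        _ ≤ _ := hflat _ _ _ _ hmm
  · intro ρ hρ
    set R : ℝ := max 1 (Real.exp (2*ρ/C₁)) with hRdef
    have hR1 : (1:ℝ) ≤ R := le_max_left _ _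
    set Nb : ℕ := ⌈Cg * R ^ dd⌉₊ with hNb
    set k : ℤ := (⌈ρ⌉₊ : ℤ) with hk
    refine ⟨(2*⌈ρ⌉₊+1)^r * Nb, ?_⟩
    rintro p ⟨m, g, hgΔ, rfl⟩
    set a := intPt r m with ha
    set S : Finset (Fin r → ℤ) :=
      Fintype.piFinset (fun i => Finset.Icc (m i - k) (m i + k)) with hS
    set Hs : (Fin r → ℤ) → Set N := fun m' =>
      {h | h ∈ Δ ∧ dGK (a, F a g) (intPt r m', F (intPt r m') h) ≤ ρ} with hHs
    -- per-slab bound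
    have hHfin : ∀ m', (Hs m').Finite ∧ (Hs m').ncard ≤ Nb := by
      intro m'
      rcases Set.eq_empty_or_nonempty (Hs m') with he | ⟨h₀, hh₀⟩
      · rw [he]; exact ⟨Set.finite_empty, by simp⟩
      · obtain ⟨hh₀Δ, hh₀d⟩ := hh₀
        obtain ⟨hBfin, hBcard⟩ := hg h₀ hh₀Δ R hR1
        have hsub : Hs m' ⊆ {h | h ∈ Δ ∧ dist h₀ h ≤ R} := by
          rintro h ⟨hhΔ, hhd⟩
          refine ⟨hhΔ, ?_⟩
          by_cases hne : h₀ = h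
          · subst hne; simpa using le_trans zero_le_one hR1
          · have htr : dGK (intPt r m', F (intPt r m') h₀) (intPt r m', F (intPt r m') h)
                ≤ 2 * ρ := by
              have t1 := htri (intPt r m', F (intPt r m') h₀) (a, F a g)
                (intPt r m', F (intPt r m') h)
              rw [hsymm (intPt r m', F (intPt r m') h₀) (a, F a g)] at t1
              linarith
            have hlow := (hlog (intPt r m') h₀ hh₀Δ h hhΔ hne).1
            have hdpos : (0:ℝ) < dist h₀ h := dist_pos.mpr hne
            have hloga : Real.log (dist h₀ h) ≤ 2*ρ/C₁ := by
              rw [le_div_iff₀ hC₁]; nlinarith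
            calc dist h₀ h = Real.exp (Real.log (dist h₀ h)) := (Real.exp_log hdpos).symm
              _ ≤ Real.exp (2*ρ/C₁) := Real.exp_le_exp.mpr hloga
              _ ≤ R := le_max_right _ _
        refine ⟨hBfin.subset hsub, ?_⟩
        have h1 : (Hs m').ncard ≤ {h | h ∈ Δ ∧ dist h₀ h ≤ R}.ncard :=
          Set.ncard_le_ncard hsub hBfin
        have h2 : ({h | h ∈ Δ ∧ dist h₀ h ≤ R}.ncard : ℝ) ≤ (Nb : ℕ) := by
          exact le_trans hBcard (Nat.le_ceil _)
        exact le_trans h1 (by exact_mod_cast h2)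
    -- inclusion into the finite union
    set U : Finset (EuclideanSpace ℝ (Fin r) × N) :=
      S.biUnion (fun m' => ((hHfin m').1.toFinset.image
        (fun h => (intPt r m', F (intPt r m') h)))) with hU
    have hsubT : {q | q ∈ XSet r Δ F ∧ dGK (a, F a g) q ≤ ρ} ⊆ ↑U := by
      rintro q ⟨⟨m', h, hhΔ, rfl⟩, hdq⟩
      simp only [hU, Finset.coe_biUnion, Set.mem_iUnion, Finset.mem_coe,
        Finset.mem_image, Set.Finite.mem_toFinset]
      refine ⟨m', ?_, h, ⟨hhΔ, hdq⟩, rfl⟩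
      -- m' ∈ S
      rw [hS, Fintype.mem_piFinset]
      intro i
      rw [Finset.mem_Icc]
      have hk0 : (0:ℤ) ≤ k := by positivity
      by_cases hmm : a = intPt r m'
      · have := intPt_inj hmm; subst this; omega
      · have hfl : ‖a - intPt r m'‖ ≤ ρ := le_trans (hflat _ _ (F a g) (F (intPt r m') h) hmm) hdq
        have hco : |(m i : ℝ) - (m' i : ℝ)| ≤ ρ := by
          have := coord_abs_le a (intPt r m') i
          rw [ha, intPt_apply, intPt_apply] at this
          linarith
        have hcoz : |m i - m' i| ≤ k := by
          have hcast : (|m i - m' i| : ℝ) ≤ (k : ℝ) := by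
            rw [hk]
            push_cast
            exact le_trans (le_of_eq (by ring_nf) |>.trans hco) (Nat.le_ceil ρ)
          exact_mod_cast hcast
        have := abs_le.mp hcoz
        omega
    refine ⟨Set.Finite.subset U.finite_toSet hsubT, ?_⟩
    calc {q | q ∈ XSet r Δ F ∧ dGK (a, F a g) q ≤ ρ}.ncard
        ≤ (↑U : Set _).ncard := Set.ncard_le_ncard hsubT U.finite_toSet
      _ = U.card := Set.ncard_coe_finset U
      _ ≤ ∑ m' ∈ S, ((hHfin m').1.toFinset.image
            (fun h => (intPt r m', F (intPt r m') h))).card := Finset.card_biUnion_le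
      _ ≤ ∑ m' ∈ S, Nb := by
          apply Finset.sum_le_sum
          intro m' _
          calc _ ≤ (hHfin m').1.toFinset.card := Finset.card_image_le
            _ ≤ Nb := by
                have h2 := (hHfin m').2
                rwa [Set.ncard_eq_toFinset_card _ (hHfin m').1] at h2
      _ = S.card * Nb := by rw [Finset.sum_const, smul_eq_mul]
      _ ≤ (2*⌈ρ⌉₊+1)^r * Nb := by
          apply Nat.mul_le_mul_right
          rw [hS, Fintype.card_piFinset]
          apply le_of_eq
          rw [Finset.prod_congr rfl (fun i _ => ?_), Finset.prod_const, Finset.card_univ,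
            Fintype.card_fin]
          rw [Int.card_Icc]
          omega
end

section
/- Under the standing assumptions (logarithmic distortion: d_{G/K}((a,F_a(x)),(a,F_a(y))) ≤ C ln d₀(x,y) for all a ∈ ℤ^r and x ≠ y in Δ, and Δ a subgroup of N with inf of positive d₀-distances > 1), the action of Δ on X(Δ) given by g · (a, F_a(h)) = (a, F_a(h g⁻¹)) is a translation-like action: it is free, and for each g ∈ Δ, sup over points of X(Δ) of the displacement is at most C ln d₀(1, g). -/
theorem mul_inv_ne_self {G : Type*} [Group G] {g : G} (h : G) (hg : g ≠ 1) : h * g⁻¹ ≠ h :=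
  mul_ne_left.mpr (inv_ne_one.mpr hg)

section LeftInvariantDist

variable {G : Type*} [Group G] [PseudoMetricSpace G]

theorem dist_one_inv_of_leftInvariant
    (hinv : ∀ a b c : G, dist (a * b) (a * c) = dist b c) (g : G) :
    dist 1 g⁻¹ = dist 1 g := by
  simpa [dist_comm] using (hinv g 1 g⁻¹).symm

theorem dist_mul_inv_right_of_leftInvariant
    (hinv : ∀ a b c : G, dist (a * b) (a * c) = dist b c) (h g : G) :
    dist h (h * g⁻¹) = dist 1 g := by
  simpa [dist_one_inv_of_leftInvariant hinv] using hinv h 1 g⁻¹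

end LeftInvariantDist

theorem XSet_action_translation_like_general
    (r : ℕ) {N : Type*} [Group N] [MetricSpace N]
    (hinv : ∀ a b c : N, dist (a * b) (a * c) = dist b c)
    (Δ : Subgroup N)
    (F : EuclideanSpace ℝ (Fin r) → N → N)
    (hFinj : ∀ a, Function.Injective (F a))
    (dGK : EuclideanSpace ℝ (Fin r) × N → EuclideanSpace ℝ (Fin r) × N → ℝ)
    (C : ℝ)
    (hlog : ∀ (m : Fin r → ℤ), ∀ x ∈ Δ, ∀ y ∈ Δ, x ≠ y →
      dGK (intPt r m, F (intPt r m) x) (intPt r m, F (intPt r m) y) ≤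
        C * Real.log (dist x y)) :
    (∀ g ∈ Δ, g ≠ 1 → ∀ (m : Fin r → ℤ), ∀ h ∈ Δ,
      (intPt r m, F (intPt r m) (h * g⁻¹)) ≠ (intPt r m, F (intPt r m) h)) ∧
    (∀ g ∈ Δ, g ≠ 1 → ∀ (m : Fin r → ℤ), ∀ h ∈ Δ,
      dGK (intPt r m, F (intPt r m) h) (intPt r m, F (intPt r m) (h * g⁻¹)) ≤
        C * Real.log (dist (1 : N) g)) := by
  refine ⟨fun g _ hg1 m h _ heq => ?_, fun g hg hg1 m h hh => ?_⟩
  · exact mul_inv_ne_self h hg1 (hFinj _ (congrArg Prod.snd heq))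
  · rw [← dist_mul_inv_right_of_leftInvariant hinv h g]
    exact hlog m h hh _ (Δ.mul_mem hh (Δ.inv_mem hg)) (mul_inv_ne_self h hg1).symm

/-- Let `Δ` be a cocompact lattice (subgroup) of the nilpotent
group `N` whose left-invariant metric `d₀` separates `Δ` by more than `1`, let
`F_a` be the (injective) dilation maps, and assume the upper logarithmic
distortion bound `d_{G/K}((a,F_a x),(a,F_a y)) ≤ C ln d₀(x,y)` for `a ∈ ℤ^r`
and distinct `x, y ∈ Δ`.  Then the action `g · (a, F_a h) = (a, F_a (h g⁻¹))` of
`Δ` on `X(Δ)` is translation-like: it is free, and for each `g ≠ 1` the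
displacement of every point of `X(Δ)` is at most `C ln d₀(1, g)`. -/
theorem XSet_action_translation_like
    (r : ℕ) {N : Type*} [Group N] [MetricSpace N]
    (hinv : ∀ a b c : N, dist (a * b) (a * c) = dist b c)
    (Δ : Subgroup N)
    (hsep : ∃ s : ℝ, 1 < s ∧ ∀ x ∈ Δ, ∀ y ∈ Δ, x ≠ y → s ≤ dist x y)
    (F : EuclideanSpace ℝ (Fin r) → N → N)
    (hFinj : ∀ a, Function.Injective (F a))
    (dGK : EuclideanSpace ℝ (Fin r) × N → EuclideanSpace ℝ (Fin r) × N → ℝ)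
    (C : ℝ) (hC : 0 < C)
    (hlog : ∀ (m : Fin r → ℤ), ∀ x ∈ Δ, ∀ y ∈ Δ, x ≠ y →
      dGK (intPt r m, F (intPt r m) x) (intPt r m, F (intPt r m) y) ≤
        C * Real.log (dist x y)) :
    (∀ g ∈ Δ, g ≠ 1 → ∀ (m : Fin r → ℤ), ∀ h ∈ Δ,
      (intPt r m, F (intPt r m) (h * g⁻¹)) ≠ (intPt r m, F (intPt r m) h)) ∧
    (∀ g ∈ Δ, g ≠ 1 → ∀ (m : Fin r → ℤ), ∀ h ∈ Δ,
      dGK (intPt r m, F (intPt r m) h) (intPt r m, F (intPt r m) (h * g⁻¹)) ≤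
        C * Real.log (dist (1 : N) g)) :=
  XSet_action_translation_like_general r hinv Δ F hFinj dGK C hlog
end

section
/- Let X be a metric space, ε > 0, and suppose Y ⊆ X is ε-dense in X (every point of X is within distance ε of Y). If Z ⊆ X is another subset such that Z is ε'-dense in X, and both Y and Z with the induced metrics are non-amenable UDBG spaces, then Y and Z are bi-Lipschitz equivalent. -/
/-!
Non-amenability of a space `Y` of bounded geometry yields an isoperimetric inequality
`|∂_R S| ≥ c |S|`; iterating it, `R`-thickenings of finite sets grow exponentially, which beats
any uniform bound on the fibres of a map `Y → Z` moving points a bounded distance. Hall's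
marriage theorem (in its infinite form) then yields an injection `Y → Z` at bounded distance
from the identity of the ambient space, and symmetrically one `Z → Y`; Schröder–Bernstein
combines them into a bijection at bounded distance, which is bi-Lipschitz since both spaces
are uniformly discrete.
-/

open Set Metric Filter Function

section Thickening

variable {W : Type*} [MetricSpace W]

theorem cthickening_eq_union_rBoundary {S : Set W} (hS : S.Finite) {r : ℝ} (hr : 0 ≤ r) :
    cthickening r S = S ∪ rBoundary S r := by
  rw [hS.isCompact.cthickening_eq_biUnion_closedBall hr]
  ext x
  simp only [mem_iUnion₂, mem_closedBall, mem_union, rBoundary, exists_prop]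
  constructor
  · rintro ⟨y, hy, hxy⟩
    by_cases hx : x ∈ S
    exacts [Or.inl hx, Or.inr ⟨hx, y, hy, hxy⟩]
  · rintro (hx | ⟨-, y, hy, hxy⟩)
    exacts [⟨x, hx, by simpa using hr⟩, ⟨y, hy, hxy⟩]

theorem rBoundary_mono (S : Set W) {r r' : ℝ} (h : r ≤ r') : rBoundary S r ⊆ rBoundary S r' :=
  fun _ ⟨hx, y, hy, hxy⟩ => ⟨hx, y, hy, hxy.trans h⟩

end Thickening

theorem Set.ncard_le_mul_ncard_image {α β : Type*} {f : α → β} {s : Set α} (hs : s.Finite)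
    {n : ℕ} (hn : ∀ b, (f ⁻¹' {b}).encard ≤ n) : s.ncard ≤ n * (f '' s).ncard := by
  classical
  lift s to Finset α using hs
  rw [ncard_coe_finset, ← Finset.coe_image, ncard_coe_finset]
  refine Finset.card_le_mul_card_image s n fun b _ => ?_
  have hsub : (({a ∈ s | f a = b} : Finset α) : Set α) ⊆ f ⁻¹' {b} := fun a ha =>
    (Finset.mem_filter.1 ha).2
  exact_mod_cast (Set.encard_coe_eq_coe_finsetCard _).symm.trans_le
    ((encard_le_encard hsub).trans (hn b))

namespace BoundedGeometry

variable {W : Type*} [MetricSpace W]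

theorem finite_closedBall (hW : BoundedGeometry W) (x : W) (r : ℝ) : (closedBall x r).Finite := by
  obtain ⟨C, hC⟩ := hW (max r 1) (by positivity)
  exact (hC x).1.subset (closedBall_subset_closedBall (le_max_left r 1))

theorem finite_cthickening (hW : BoundedGeometry W) {S : Set W} (hS : S.Finite) {r : ℝ}
    (hr : 0 ≤ r) : (cthickening r S).Finite := by
  rw [hS.isCompact.cthickening_eq_biUnion_closedBall hr]
  exact hS.biUnion fun x _ => hW.finite_closedBall x r

theorem finite_rBoundary (hW : BoundedGeometry W) {S : Set W} (hS : S.Finite) {r : ℝ}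
    (hr : 0 ≤ r) : (rBoundary S r).Finite :=
  (hW.finite_cthickening hS hr).subset (cthickening_eq_union_rBoundary hS hr ▸ subset_union_right)

theorem exists_encard_le_of_dist_le (hW : BoundedGeometry W) (r : ℝ) :
    ∃ C : ℕ, ∀ S : Set W, (∀ a ∈ S, ∀ b ∈ S, dist a b ≤ r) → S.encard ≤ C := by
  obtain ⟨C, hC⟩ := hW (max r 1) (by positivity)
  refine ⟨C, fun S hS => ?_⟩
  rcases S.eq_empty_or_nonempty with rfl | ⟨a, ha⟩
  · simp
  have hsub : S ⊆ closedBall a (max r 1) := fun b hb =>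
    (hS b hb a ha).trans (le_max_left r 1)
  calc S.encard ≤ (closedBall a (max r 1)).encard := encard_le_encard hsub
    _ = (closedBall a (max r 1)).ncard := (hC a).1.cast_ncard_eq.symm
    _ ≤ C := by exact_mod_cast (hC a).2

theorem isFolnerSeq_of_mul_ncard_rBoundary_lt (hW : BoundedGeometry W) {Fs : ℕ → Set W}
    (hfin : ∀ n, (Fs n).Finite)
    (hlt : ∀ n : ℕ, ((n : ℝ) + 1) * (rBoundary (Fs n) (n + 1)).ncard < (Fs n).ncard) :
    IsFolnerSeq Fs := by
  have hpos : ∀ n, (0 : ℝ) < (Fs n).ncard := fun n => by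
    refine lt_of_le_of_lt ?_ (hlt n)
    positivity
  refine ⟨fun n => ⟨hfin n, nonempty_of_ncard_ne_zero (by exact_mod_cast (hpos n).ne')⟩,
    fun R _ => ?_⟩
  have hle : ∀ᶠ n : ℕ in atTop,
      ((rBoundary (Fs n) R).ncard : ℝ) / (Fs n).ncard ≤ 1 / ((n : ℝ) + 1) := by
    filter_upwards [eventually_ge_atTop ⌈R⌉₊] with n hn
    have hRn : R ≤ n + 1 := (Nat.le_ceil R).trans (by exact_mod_cast hn.trans n.le_succ)
    have hmono : ((rBoundary (Fs n) R).ncard : ℝ) ≤ (rBoundary (Fs n) (n + 1)).ncard := by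
      exact_mod_cast ncard_le_ncard (rBoundary_mono _ hRn)
        (hW.finite_rBoundary (hfin n) (by positivity))
    rw [div_le_div_iff₀ (hpos n) (by positivity)]
    nlinarith [hlt n]
  exact squeeze_zero' (Eventually.of_forall fun n => by positivity) hle
    tendsto_one_div_add_atTop_nhds_zero_nat

theorem one_add_mul_ncard_le_ncard_cthickening (hW : BoundedGeometry W) {R c : ℝ} (hR : 0 ≤ R)
    (hiso : ∀ S : Set W, S.Finite → c * S.ncard ≤ (rBoundary S R).ncard)
    {S : Set W} (hS : S.Finite) : (1 + c) * S.ncard ≤ (cthickening R S).ncard := by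
  have hdisj : Disjoint S (rBoundary S R) := disjoint_left.2 fun _ hx hx' => hx'.1 hx
  rw [cthickening_eq_union_rBoundary hS hR,
    ncard_union_eq hdisj hS (hW.finite_rBoundary hS hR)]
  push_cast
  linarith [hiso S hS]

theorem pow_mul_ncard_le_ncard_cthickening (hW : BoundedGeometry W) {R c : ℝ} (hR : 0 ≤ R)
    (hc : 0 ≤ c) (hiso : ∀ S : Set W, S.Finite → c * S.ncard ≤ (rBoundary S R).ncard)
    (k : ℕ) {S : Set W} (hS : S.Finite) :
    (1 + c) ^ k * S.ncard ≤ (cthickening (k * R) S).ncard := by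
  induction k with
  | zero =>
    simpa using ncard_le_ncard (self_subset_cthickening S) (hW.finite_cthickening hS le_rfl)
  | succ k ih =>
    have hT := hW.finite_cthickening hS (by positivity : (0 : ℝ) ≤ k * R)
    have hsub : cthickening R (cthickening (k * R) S) ⊆ cthickening ((k + 1 : ℕ) * R) S := by
      refine (cthickening_cthickening_subset hR (by positivity) S).trans (cthickening_mono ?_ S)
      push_cast
      linarith
    calc (1 + c) ^ (k + 1) * S.ncard = (1 + c) * ((1 + c) ^ k * S.ncard) := by ring
      _ ≤ (1 + c) * (cthickening (k * R) S).ncard := by gcongr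
      _ ≤ (cthickening R (cthickening (k * R) S)).ncard :=
        hW.one_add_mul_ncard_le_ncard_cthickening hR hiso hT
      _ ≤ (cthickening ((k + 1 : ℕ) * R) S).ncard := by
        exact_mod_cast ncard_le_ncard hsub (hW.finite_cthickening hS (by positivity))

end BoundedGeometry

namespace NonAmenable

variable {W : Type*} [MetricSpace W]

theorem exists_isoperimetric (hna : NonAmenable W) (hW : BoundedGeometry W) :
    ∃ R ≥ (0 : ℝ), ∃ c > (0 : ℝ), ∀ S : Set W, S.Finite → c * S.ncard ≤ (rBoundary S R).ncard := by
  by_contra! h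
  have hbad : ∀ n : ℕ, ∃ S : Set W, S.Finite ∧
      ((n : ℝ) + 1) * (rBoundary S (n + 1)).ncard < S.ncard := fun n => by
    obtain ⟨S, hS, hlt⟩ := h (n + 1) (by positivity) (1 / (n + 1)) (by positivity)
    refine ⟨S, hS, ?_⟩
    rwa [one_div_mul_eq_div, lt_div_iff₀' (by positivity)] at hlt
  choose Fs hfin hlt using hbad
  exact hna ⟨Fs, hW.isFolnerSeq_of_mul_ncard_rBoundary_lt hfin hlt⟩

theorem exists_ncard_le_ncard_image_cthickening (hna : NonAmenable W) (hW : BoundedGeometry W)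
    {Z : Type*} (φ : W → Z) {C : ℕ} (hfib : ∀ z, (φ ⁻¹' {z}).encard ≤ C) :
    ∃ r ≥ (0 : ℝ), ∀ S : Set W, S.Finite → S.ncard ≤ (φ '' cthickening r S).ncard := by
  obtain ⟨R, hR, c, hc, hiso⟩ := hna.exists_isoperimetric hW
  obtain ⟨k, hk⟩ := pow_unbounded_of_one_lt (C : ℝ) (by linarith : 1 < 1 + c)
  refine ⟨k * R, by positivity, fun S hS => ?_⟩
  have hT := hW.finite_cthickening hS (by positivity : (0 : ℝ) ≤ k * R)
  have hgrow : (1 + c) ^ k * S.ncard ≤ (1 + c) ^ k * (φ '' cthickening (k * R) S).ncard :=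
    calc (1 + c) ^ k * S.ncard ≤ (cthickening (k * R) S).ncard :=
          hW.pow_mul_ncard_le_ncard_cthickening hR hc.le hiso k hS
      _ ≤ C * (φ '' cthickening (k * R) S).ncard := by
          exact_mod_cast ncard_le_mul_ncard_image hT hfib
      _ ≤ (1 + c) ^ k * (φ '' cthickening (k * R) S).ncard := by gcongr
  exact_mod_cast le_of_mul_le_mul_left hgrow (by positivity)

theorem exists_injective_dist_le {Y Z : Type*} [MetricSpace Y] [MetricSpace Z]
    (hna : NonAmenable Y) (hY : BoundedGeometry Y) (hZ : BoundedGeometry Z) {φ : Y → Z} {C : ℕ}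
    (hfib : ∀ z, (φ ⁻¹' {z}).encard ≤ C)
    (hφ : ∀ r, ∃ s, ∀ a b, dist a b ≤ r → dist (φ a) (φ b) ≤ s) :
    ∃ D, ∃ f : Y → Z, Injective f ∧ ∀ y, dist (f y) (φ y) ≤ D := by
  classical
  obtain ⟨r, hr, hexp⟩ := hna.exists_ncard_le_ncard_image_cthickening hY φ hfib
  obtain ⟨D, hD⟩ := hφ r
  let t : Y → Finset Z := fun y => (hZ.finite_closedBall (φ y) D).toFinset
  have hall : ∀ A : Finset Y, A.card ≤ (A.biUnion t).card := fun A => by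
    have himg : φ '' cthickening r A ⊆ A.biUnion t := by
      rintro _ ⟨y, hy, rfl⟩
      rw [A.finite_toSet.isCompact.cthickening_eq_biUnion_closedBall hr] at hy
      obtain ⟨a, ha, hya⟩ := mem_iUnion₂.1 hy
      simpa [t] using ⟨a, ha, hD y a hya⟩
    calc A.card = (A : Set Y).ncard := (ncard_coe_finset A).symm
      _ ≤ (φ '' cthickening r A).ncard := hexp _ A.finite_toSet
      _ ≤ (A.biUnion t : Set Z).ncard := ncard_le_ncard himg (Finset.finite_toSet _)
      _ = (A.biUnion t).card := ncard_coe_finset _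
  obtain ⟨f, hf, hft⟩ := (Finset.all_card_le_biUnion_card_iff_exists_injective t).1 hall
  exact ⟨D, f, hf, fun y => by simpa [t] using hft y⟩

end NonAmenable

theorem exists_injective_dist_le_of_dense {X : Type*} [MetricSpace X] {Y Z : Set X}
    (hYna : NonAmenable Y) (hYbg : BoundedGeometry Y) (hZbg : BoundedGeometry Z) {ε : ℝ}
    (hZdense : ∀ x : X, ∃ z ∈ Z, dist x z ≤ ε) :
    ∃ D, ∃ f : Y → Z, Injective f ∧ ∀ y : Y, dist (y : X) (f y) ≤ D := by
  choose φ hφZ hφ using fun y : Y => hZdense y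
  let ψ : Y → Z := fun y => ⟨φ y, hφZ y⟩
  obtain ⟨C, hC⟩ := hYbg.exists_encard_le_of_dist_le (ε + ε)
  have hfib : ∀ z, (ψ ⁻¹' {z}).encard ≤ C := fun z => hC _ fun a ha b hb => by
    have hφa := hφ a
    rw [show φ a = φ b from congrArg Subtype.val (ha.trans hb.symm)] at hφa
    rw [Subtype.dist_eq]
    linarith [dist_triangle_right (a : X) b (φ b), hφ b]
  have hψ : ∀ r, ∃ s, ∀ a b : Y, dist a b ≤ r → dist (ψ a) (ψ b) ≤ s := fun r =>
    ⟨ε + r + ε, fun a b hab => by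
      show dist (φ a) (φ b) ≤ _
      have := dist_triangle4 (φ a) a b (φ b)
      rw [dist_comm (φ a) (a : X)] at this
      linarith [hφ a, hφ b, show dist (a : X) b ≤ r from hab]⟩
  obtain ⟨D, f, hf, hfD⟩ := hYna.exists_injective_dist_le hYbg hZbg hfib hψ
  refine ⟨ε + D, f, hf, fun y => ?_⟩
  linarith [dist_triangle (y : X) (φ y) (f y), hφ y, dist_comm (f y : X) (φ y) ▸ hfD y]

theorem le_one_add_div_mul_of_le_add {d d' δ A : ℝ} (hδ : 0 < δ) (hd : δ ≤ d) (hA : 0 ≤ A)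
    (h : d' ≤ d + A) : d' ≤ (1 + A / δ) * d := by
  have : A ≤ A / δ * d := by
    calc A = A / δ * δ := (div_mul_cancel₀ A hδ.ne').symm
      _ ≤ A / δ * d := by gcongr
  linarith

theorem UniformlyDiscrete.exists_biLipschitz_of_abs_dist_sub_le {α β : Type*} [MetricSpace α]
    [MetricSpace β] (hα : UniformlyDiscrete α) (hβ : UniformlyDiscrete β) {f : α → β}
    (hf : Injective f) {A : ℝ} (hA : ∀ a b, |dist (f a) (f b) - dist a b| ≤ A) :
    ∃ K ≥ (1 : ℝ), ∀ a b : α,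
      dist a b / K ≤ dist (f a) (f b) ∧ dist (f a) (f b) ≤ K * dist a b := by
  obtain ⟨δα, hδα, hα⟩ := hα
  obtain ⟨δβ, hδβ, hβ⟩ := hβ
  have hδ : 0 < min δα δβ := lt_min hδα hδβ
  refine ⟨1 + |A| / min δα δβ, by simp only [le_add_iff_nonneg_right]; positivity,
    fun a b => ?_⟩
  rcases eq_or_ne a b with rfl | hab
  · simp
  have hAab := (abs_sub_le_iff.1 (hA a b)).imp (·.trans (le_abs_self A)) (·.trans (le_abs_self A))
  constructor
  · rw [div_le_iff₀' (by positivity)]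
    exact le_one_add_div_mul_of_le_add hδ ((min_le_right _ _).trans (hβ _ _ (hf.ne hab)))
      (abs_nonneg A) (by linarith [hAab.2])
  · exact le_one_add_div_mul_of_le_add hδ ((min_le_left _ _).trans (hα _ _ hab))
      (abs_nonneg A) (by linarith [hAab.1])

theorem dense_nonamenable_UDBG_subsets_biLipschitz_general
    {X : Type*} [MetricSpace X] (Y Z : Set X) (ε ε' : ℝ)
    (hYdense : ∀ x : X, ∃ y ∈ Y, dist x y ≤ ε)
    (hZdense : ∀ x : X, ∃ z ∈ Z, dist x z ≤ ε')
    (hYud : UniformlyDiscrete Y) (hYbg : BoundedGeometry Y)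
    (hYna : NonAmenable Y)
    (hZud : UniformlyDiscrete Z) (hZbg : BoundedGeometry Z)
    (hZna : NonAmenable Z) :
    ∃ f : Y → Z, Function.Bijective f ∧
      ∃ K ≥ (1 : ℝ), ∀ a b : Y,
        dist a b / K ≤ dist (f a) (f b) ∧ dist (f a) (f b) ≤ K * dist a b := by
  obtain ⟨D, f, hf, hfD⟩ := exists_injective_dist_le_of_dense hYna hYbg hZbg hZdense
  obtain ⟨D', g, hg, hgD⟩ := exists_injective_dist_le_of_dense hZna hZbg hYbg hYdense
  obtain ⟨h, hh, hhM⟩ := Embedding.schroeder_bernstein_of_rel hf hg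
    (fun y z => dist (y : X) z ≤ max D D') (fun y => (hfD y).trans (le_max_left D D'))
    (fun z => (dist_comm (g z : X) z ▸ hgD z).trans (le_max_right D D'))
  refine ⟨h, hh, hYud.exists_biLipschitz_of_abs_dist_sub_le hZud hh.injective
    (A := max D D' + max D D') fun a b => ?_⟩
  rw [← Real.dist_eq]
  calc _ ≤ dist (h a : X) a + dist (h b : X) b := dist_dist_dist_le (h a : X) (h b) a b
    _ ≤ max D D' + max D D' := by
      rw [dist_comm (h a : X), dist_comm (h b : X)]
      exact add_le_add (hhM a) (hhM b)

/-- If `Y` and `Z` are coarsely dense subsets of a common metric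
space `X` (`Y` is `ε`-dense and `Z` is `ε'`-dense) and both, with the induced
metrics, are non-amenable UDBG spaces, then `Y` and `Z` are bi-Lipschitz
equivalent. -/
theorem dense_nonamenable_UDBG_subsets_biLipschitz
    {X : Type*} [MetricSpace X] (Y Z : Set X) (ε ε' : ℝ)
    (hε : 0 < ε) (hε' : 0 < ε')
    (hYdense : ∀ x : X, ∃ y ∈ Y, dist x y ≤ ε)
    (hZdense : ∀ x : X, ∃ z ∈ Z, dist x z ≤ ε')
    (hYud : UniformlyDiscrete Y) (hYbg : BoundedGeometry Y)
    (hYna : NonAmenable Y)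
    (hZud : UniformlyDiscrete Z) (hZbg : BoundedGeometry Z)
    (hZna : NonAmenable Z) :
    ∃ f : Y → Z, Function.Bijective f ∧
      ∃ K ≥ (1 : ℝ), ∀ a b : Y,
        dist a b / K ≤ dist (f a) (f b) ∧ dist (f a) (f b) ≤ K * dist a b :=
  dense_nonamenable_UDBG_subsets_biLipschitz_general Y Z ε ε' hYdense hZdense hYud hYbg hYna hZud
    hZbg hZna
end

section
/- Suppose d_{G/K}((x,g),(y,h)) ≥ |x−y| for all x,y ∈ ℝ^r, g,h ∈ N, with equality when g = h, and suppose d_{G/K}((a, F_a(x)), (a, F_a(y))) ≤ C d₀(x,y) for small distances (via the distortion bound) and Δ is ε₁-dense in (N, d₀). Then X(Δ) = {(a, F_a(g)) : a ∈ ℤ^r, g ∈ Δ} is ε-dense in ℝ^r × N with respect to d_{G/K}, where ε = C ε₁ + 2r: every point (x, g) ∈ ℝ^r × N lies within d_{G/K}-distance ε of some point of X(Δ). -/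
theorem EuclideanSpace.norm_le_sqrt_card_mul {ι : Type*} [Fintype ι]
    (v : EuclideanSpace ℝ ι) {c : ℝ} (hc : 0 ≤ c) (hv : ∀ i, |v i| ≤ c) :
    ‖v‖ ≤ √(Fintype.card ι) * c := by
  rw [EuclideanSpace.norm_eq, ← Real.sqrt_sq hc, ← Real.sqrt_mul (Nat.cast_nonneg _)]
  refine Real.sqrt_le_sqrt ?_
  calc ∑ i, ‖v i‖ ^ 2 ≤ ∑ _i : ι, c ^ 2 :=
        Finset.sum_le_sum fun i _ => pow_le_pow_left₀ (norm_nonneg _) (hv i) 2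
    _ = Fintype.card ι * c ^ 2 := by simp

theorem norm_sub_intPt_round_le {r : ℕ} (x : EuclideanSpace ℝ (Fin r)) :
    ‖x - intPt r (fun i => round (x i))‖ ≤ √r / 2 := by
  have h := EuclideanSpace.norm_le_sqrt_card_mul (x - intPt r (fun i => round (x i)))
    (by norm_num) fun i => abs_sub_round (x i)
  rwa [Fintype.card_fin, mul_one_div] at h

theorem sqrt_natCast_le_self (n : ℕ) : √(n : ℝ) ≤ n := by
  rcases n.eq_zero_or_pos with rfl | hn
  · simp
  · exact Real.sqrt_le_self_iff.mpr (Or.inr (mod_cast hn))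

theorem XSet_coarsely_dense_general
    (r : ℕ) {N : Type*} [MetricSpace N]
    (Δ : Set N) (ε₁ : ℝ)
    (hdense : ∀ g : N, ∃ h ∈ Δ, dist g h ≤ ε₁)
    (F : EuclideanSpace ℝ (Fin r) → N → N)
    (hFinv : ∀ (a : EuclideanSpace ℝ (Fin r)) (g : N), F a (F (-a) g) = g)
    (dGK : EuclideanSpace ℝ (Fin r) × N → EuclideanSpace ℝ (Fin r) × N → ℝ)
    (htri : ∀ p q w, dGK p w ≤ dGK p q + dGK q w)
    (hflateq : ∀ (x y : EuclideanSpace ℝ (Fin r)) (g : N),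
      dGK (x, g) (y, g) = ‖x - y‖)
    (C : ℝ) (hC : 0 < C)
    (hsmall : ∀ (a : EuclideanSpace ℝ (Fin r)) (x y : N), dist x y ≤ ε₁ →
      dGK (a, F a x) (a, F a y) ≤ C * dist x y) :
    ∀ p : EuclideanSpace ℝ (Fin r) × N,
      ∃ q ∈ XSet r Δ F, dGK p q ≤ C * ε₁ + 2 * r := by
  rintro ⟨x, g⟩
  set m : Fin r → ℤ := fun i => round (x i)
  set a := intPt r m
  obtain ⟨h, hhΔ, hh⟩ := hdense (F (-a) g)
  refine ⟨(a, F a h), ⟨m, h, hhΔ, rfl⟩, ?_⟩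
  have horizontal : dGK (x, g) (a, g) ≤ 2 * r := by
    rw [hflateq]
    have hr : (0 : ℝ) ≤ r := Nat.cast_nonneg r
    linarith [norm_sub_intPt_round_le x, sqrt_natCast_le_self r]
  have vertical : dGK (a, g) (a, F a h) ≤ C * ε₁ :=
    calc dGK (a, g) (a, F a h) = dGK (a, F a (F (-a) g)) (a, F a h) := by rw [hFinv]
      _ ≤ C * dist (F (-a) g) h := hsmall a _ _ hh
      _ ≤ C * ε₁ := by gcongr
  linarith [htri (x, g) (a, g) (a, F a h)]

/-- Suppose `d_{G/K}` satisfies the triangle inequality, the flat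
lemma `d_{G/K}((x,g),(y,h)) ≥ |x−y|` with equality `= |x−y|` when `g = h`, the
small-distance distortion bound
`d_{G/K}((a, F_a x),(a, F_a y)) ≤ C d₀(x,y)` for `d₀(x,y) ≤ ε₁`, the dilations
satisfy `F_a ∘ F_{−a} = id`, and `Δ` is `ε₁`-dense in `(N, d₀)`.  Then `X(Δ)`
is `ε`-dense in `ℝ^r × N` for `ε = C ε₁ + 2r`. -/
theorem XSet_coarsely_dense
    (r : ℕ) {N : Type*} [MetricSpace N]
    (Δ : Set N) (ε₁ : ℝ) (hε₁ : 0 < ε₁)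
    (hdense : ∀ g : N, ∃ h ∈ Δ, dist g h ≤ ε₁)
    (F : EuclideanSpace ℝ (Fin r) → N → N)
    (hFinv : ∀ (a : EuclideanSpace ℝ (Fin r)) (g : N), F a (F (-a) g) = g)
    (dGK : EuclideanSpace ℝ (Fin r) × N → EuclideanSpace ℝ (Fin r) × N → ℝ)
    (htri : ∀ p q w, dGK p w ≤ dGK p q + dGK q w)
    (hflat : ∀ (x y : EuclideanSpace ℝ (Fin r)) (g h : N),
      x ≠ y → ‖x - y‖ ≤ dGK (x, g) (y, h))
    (hflateq : ∀ (x y : EuclideanSpace ℝ (Fin r)) (g : N),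
      dGK (x, g) (y, g) = ‖x - y‖)
    (C : ℝ) (hC : 0 < C)
    (hsmall : ∀ (a : EuclideanSpace ℝ (Fin r)) (x y : N), dist x y ≤ ε₁ →
      dGK (a, F a x) (a, F a y) ≤ C * dist x y) :
    ∀ p : EuclideanSpace ℝ (Fin r) × N,
      ∃ q ∈ XSet r Δ F, dGK p q ≤ C * ε₁ + 2 * r :=
  XSet_coarsely_dense_general r Δ ε₁ hdense F hFinv dGK htri hflateq C hC hsmall
end
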